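/- arXiv:1507.04391 — 10 statements merged into one kernel-verified Lean document; each statement's English description precedes it below -/
import Mathlib

section
/- There is an absolute constant C > 0 with the following property. Let G be a graph with vertex set {1,…,n}, m ≥ 1 edges and average degree Δ = 2m/n; let x ∈ {0,1}^n, α1 ∈ (0,1), α2 > 0, and let r ≥ C·n·ln(n)/(α1²·α2·Δ) be a positive integer. Let R_1,…,R_r be drawn independently and uniformly at random (with replacement) from {1,…,n}. Fix a vertex j and set ρ_j = (n/r)·Σ_{l=1}^r 1[R_l ∈ N(j)]·x_{R_l} and ρ̂_j = Σ_{i∈N(j)} x_i. Then with probability at least 1 − 2/n³: (1−α1)·ρ̂_j − (1−α1)·α2·Δ ≤ ρ_j ≤ (1+α1)·ρ̂_j + (1+α1)·α2·Δ. -/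
open Finset Real InformationTheory

/-!
Chernoff bound by counting. For `s ⊆ V` and `R` uniform on `Fin r → V`, the coordinates of `R`
are independent, so the number of hits `#{l | R l ∈ s}` has moment generating function at most
`exp (μ (e^λ - 1))` with `μ = r #s / |V|`. Exponential Markov with `λ = log (t / μ)` bounds either
tail beyond `t` by `exp (-μ klFun (t / μ))`, and the elementary bounds
`(x - 1)² / (x + 1) ≤ klFun x` (for `1 ≤ x`) and `(1 - x)² / 2 ≤ klFun x` (for `x ≤ 1`) turn this,
for relative error `δ` plus additive slack `c`, into `exp (-δ² c / 3)`. Taking for `s` the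
neighbours `i` of `j` with `x i = 1`, `c = r α₂ Δ / n` and `C = 9`, each tail has probability
at most `n⁻³`.
-/

lemma two_mul_div_add_two_le_log_one_add {a : ℝ} (ha : 0 ≤ a) : 2 * a / (a + 2) ≤ log (1 + a) := by
  simpa [mul_div_assoc] using le_hasSum (hasSum_log_one_add ha) 0 fun k _ ↦ by positivity

lemma sq_sub_one_div_add_one_le_klFun {x : ℝ} (hx : 1 ≤ x) : (x - 1) ^ 2 / (x + 1) ≤ klFun x := by
  have hlog : 2 * (x - 1) / (x + 1) ≤ log x := by
    simpa [add_comm, show x - 1 + 2 = x + 1 by ring] using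
      two_mul_div_add_two_le_log_one_add (sub_nonneg.2 hx)
  calc (x - 1) ^ 2 / (x + 1) = x * (2 * (x - 1) / (x + 1)) + 1 - x := by
        field_simp; ring
    _ ≤ x * log x + 1 - x := by gcongr
    _ = klFun x := (klFun_apply x).symm

lemma sq_one_sub_div_two_le_klFun {x : ℝ} (hx₀ : 0 ≤ x) (hx₁ : x ≤ 1) :
    (1 - x) ^ 2 / 2 ≤ klFun x := by
  have hanti : AntitoneOn (fun y ↦ klFun y - (1 - y) ^ 2 / 2) (Set.Icc 0 1) := by
    refine antitoneOn_of_hasDerivWithinAt_nonpos (f' := fun y ↦ log y + (1 - y)) (convex_Icc 0 1)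
      (by fun_prop) (fun y hy ↦ ?_) (fun y hy ↦ ?_) <;> rw [interior_Icc] at hy
    · have hsq : HasDerivAt (fun y ↦ (1 - y) ^ 2 / 2) (-(1 - y)) y :=
        ((((hasDerivAt_id' y).const_sub 1).fun_pow 2).div_const 2).congr_deriv (by ring)
      exact ((hasDerivAt_klFun hy.1.ne').sub hsq).hasDerivWithinAt.congr_deriv (by ring)
    · linarith [log_le_sub_one_of_pos hy.1]
  simpa [klFun_one, sub_nonneg] using hanti ⟨hx₀, hx₁⟩ ⟨zero_le_one, le_rfl⟩ hx₁

lemma mul_klFun_div {μ : ℝ} (hμ : μ ≠ 0) (t : ℝ) :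
    μ * klFun (t / μ) = t * log (t / μ) + μ - t := by
  rw [klFun_apply]; field_simp

lemma sq_mul_div_three_le_mul_klFun {μ c δ : ℝ} (hμ : 0 < μ) (hc : 0 ≤ c) (hδ₀ : 0 ≤ δ)
    (hδ₁ : δ ≤ 1) : δ ^ 2 * c / 3 ≤ μ * klFun ((1 + δ) * (μ + c) / μ) := by
  set t := (1 + δ) * (μ + c)
  have hx : 1 ≤ t / μ := (one_le_div hμ).2 (by nlinarith)
  calc δ ^ 2 * c / 3 ≤ δ ^ 2 * (μ + c) / 3 := by gcongr; linarith
    _ = (δ * (μ + c)) ^ 2 / (3 * (μ + c)) := by field_simp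
    _ ≤ (t - μ) ^ 2 / (t + μ) := by gcongr <;> nlinarith
    _ = μ * ((t / μ - 1) ^ 2 / (t / μ + 1)) := by field_simp
    _ ≤ μ * klFun (t / μ) := by gcongr; exact sq_sub_one_div_add_one_le_klFun hx

lemma sq_mul_div_two_le_mul_klFun {μ c δ : ℝ} (hc : 0 ≤ c) (hcμ : c < μ) (hδ₀ : 0 ≤ δ)
    (hδ₁ : δ ≤ 1) : δ ^ 2 * c / 2 ≤ μ * klFun ((1 - δ) * (μ - c) / μ) := by
  have hμ : 0 < μ := hc.trans_lt hcμ
  set t := (1 - δ) * (μ - c)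
  have ht₀ : 0 ≤ t := mul_nonneg (by linarith) (by linarith)
  have ht : t ≤ μ := by nlinarith
  calc δ ^ 2 * c / 2 ≤ δ ^ 2 * μ / 2 := by gcongr
    _ = (δ * μ) ^ 2 / (2 * μ) := by field_simp
    _ ≤ (μ - t) ^ 2 / (2 * μ) := by gcongr; nlinarith
    _ = μ * ((1 - t / μ) ^ 2 / 2) := by field_simp
    _ ≤ μ * klFun (t / μ) := by
        gcongr; exact sq_one_sub_div_two_le_klFun (by positivity) ((div_le_one hμ).2 ht)

lemma card_le_card_filter_and_add_card_filter_not {β : Type*} [Fintype β] (p q : β → Prop)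
    [DecidablePred p] [DecidablePred q] :
    Fintype.card β ≤ #{b | p b ∧ q b} + #{b | ¬ p b} + #{b | ¬ q b} := by
  classical
  calc Fintype.card β = #(univ : Finset β) := card_univ.symm
    _ ≤ #(({b | p b ∧ q b} : Finset β) ∪ ({b | ¬ p b} : Finset β) ∪ ({b | ¬ q b} : Finset β)) :=
        card_le_card fun b _ ↦ by simp only [mem_union, mem_filter, mem_univ, true_and]; tauto
    _ ≤ _ := (card_union_le _ _).trans (by gcongr; exact card_union_le _ _)

lemma exp_neg_le_inv_pow {a E : ℝ} (ha : 0 < a) (k : ℕ) (h : k * log a ≤ E) :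
    exp (-E) ≤ (a ^ k)⁻¹ :=
  calc exp (-E) ≤ exp (-(k * log a)) := exp_le_exp.2 (neg_le_neg h)
    _ = (a ^ k)⁻¹ := by rw [exp_neg, exp_nat_mul, exp_log ha]

lemma ite_mem_eq_ite_mem_filter_eq_one {V : Type*} [DecidableEq V] {x : V → ℝ}
    (hx : ∀ i, x i = 0 ∨ x i = 1) (N : Finset V) (v : V) :
    (if v ∈ N then x v else 0) = if v ∈ {i ∈ N | x i = 1} then 1 else 0 := by
  rcases hx v with h | h <;> by_cases hv : v ∈ N <;> simp [hv, h]

lemma sum_eq_card_filter_eq_one {V : Type*} {x : V → ℝ} (hx : ∀ i, x i = 0 ∨ x i = 1)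
    (N : Finset V) : ∑ i ∈ N, x i = #{i ∈ N | x i = 1} := by
  rw [← sum_boole]
  exact sum_congr rfl fun i _ ↦ by rcases hx i with h | h <;> simp [h]

section Sampling

variable {V : Type*} [Fintype V] {r : ℕ}

noncomputable def expectedHits (s : Finset V) (r : ℕ) : ℝ := r * #s / Fintype.card V

lemma expectedHits_pos {s : Finset V} (hs : s.Nonempty) (hr : 0 < r) : 0 < expectedHits s r := by
  have : 0 < Fintype.card V := Fintype.card_pos_iff.2 ⟨hs.choose⟩
  unfold expectedHits; positivity

lemma card_filter_le_sum_le_exp_mul_sum_exp_pow (g : V → ℝ) (t : ℝ) :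
    (#{R : Fin r → V | t ≤ ∑ l, g (R l)} : ℝ) ≤ exp (-t) * (∑ v, exp (g v)) ^ r := by
  calc (#{R : Fin r → V | t ≤ ∑ l, g (R l)} : ℝ)
      = ∑ R ∈ {R : Fin r → V | t ≤ ∑ l, g (R l)}, 1 := by simp
    _ ≤ ∑ R ∈ {R : Fin r → V | t ≤ ∑ l, g (R l)}, exp (-t + ∑ l, g (R l)) :=
        sum_le_sum fun R hR ↦ one_le_exp (by linarith [(mem_filter.1 hR).2])
    _ ≤ ∑ R : Fin r → V, exp (-t + ∑ l, g (R l)) :=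
        sum_le_sum_of_subset_of_nonneg (subset_univ _) fun _ _ _ ↦ (exp_pos _).le
    _ = exp (-t) * (∑ v, exp (g v)) ^ r := by
        simp_rw [exp_add, exp_sum, ← mul_sum]; rw [sum_pow', Fintype.piFinset_univ]

variable [DecidableEq V]

lemma sum_exp_mul_indicator_le (s : Finset V) (lam : ℝ) :
    ∑ v, exp (lam * if v ∈ s then 1 else 0) ≤
      Fintype.card V * exp (#s / Fintype.card V * (exp lam - 1)) := by
  have hsum : ∑ v, exp (lam * if v ∈ s then 1 else 0) = Fintype.card V + #s * (exp lam - 1) := by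
    have h (v : V) : exp (lam * if v ∈ s then 1 else 0) = 1 + if v ∈ s then exp lam - 1 else 0 := by
      split_ifs <;> simp
    rw [sum_congr rfl fun v _ ↦ h v, sum_add_distrib, sum_ite_mem, univ_inter]
    simp [mul_sub]
  rw [hsum]
  rcases (Fintype.card V).eq_zero_or_pos with hV | hV
  · have hs : #s = 0 := Nat.eq_zero_of_le_zero (hV ▸ card_le_univ s)
    simp [hV, hs]
  · have hV' : (0 : ℝ) < Fintype.card V := by exact_mod_cast hV
    calc (Fintype.card V : ℝ) + #s * (exp lam - 1)
        = Fintype.card V * (#s / Fintype.card V * (exp lam - 1) + 1) := by field_simp; ring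
      _ ≤ Fintype.card V * exp (#s / Fintype.card V * (exp lam - 1)) := by
        gcongr; exact add_one_le_exp _

lemma card_filter_mul_le_mul_count_le (s : Finset V) (lam t : ℝ) :
    (#{R : Fin r → V | lam * t ≤ lam * #{l | R l ∈ s}} : ℝ) ≤
      Fintype.card V ^ r * exp (r * #s / Fintype.card V * (exp lam - 1) - lam * t) := by
  have hcount (R : Fin r → V) :
      lam * (#{l | R l ∈ s} : ℝ) = ∑ l, lam * if R l ∈ s then 1 else 0 := by
    rw [← mul_sum, sum_boole]
  simp_rw [hcount]
  refine (card_filter_le_sum_le_exp_mul_sum_exp_pow (fun v ↦ lam * if v ∈ s then 1 else 0)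
    (lam * t)).trans ?_
  calc exp (-(lam * t)) * (∑ v, exp (lam * if v ∈ s then 1 else 0)) ^ r
      ≤ exp (-(lam * t)) * (Fintype.card V * exp (#s / Fintype.card V * (exp lam - 1))) ^ r := by
        gcongr
        exact sum_exp_mul_indicator_le s lam
    _ = Fintype.card V ^ r * exp (r * #s / Fintype.card V * (exp lam - 1) - lam * t) := by
        rw [mul_pow, ← exp_nat_mul, mul_left_comm, ← exp_add]; ring_nf

lemma card_filter_log_mul_le_mul_count_le (s : Finset V) {t : ℝ} (hμ : 0 < expectedHits s r)
    (ht : 0 < t) :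
    (#{R : Fin r → V | log (t / expectedHits s r) * t ≤
        log (t / expectedHits s r) * #{l | R l ∈ s}} : ℝ) ≤
      Fintype.card V ^ r * exp (-(expectedHits s r * klFun (t / expectedHits s r))) := by
  refine (card_filter_mul_le_mul_count_le s _ t).trans_eq ?_
  rw [exp_log (div_pos ht hμ), mul_klFun_div hμ.ne', ← expectedHits]
  congr 2
  field_simp
  ring

lemma card_filter_le_count_le (s : Finset V) {t : ℝ} (hμ : 0 < expectedHits s r)
    (ht : expectedHits s r ≤ t) :
    (#{R : Fin r → V | t ≤ #{l | R l ∈ s}} : ℝ) ≤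
      Fintype.card V ^ r * exp (-(expectedHits s r * klFun (t / expectedHits s r))) := by
  have hlog : 0 ≤ log (t / expectedHits s r) := log_nonneg ((one_le_div hμ).2 ht)
  refine le_trans ?_ (card_filter_log_mul_le_mul_count_le s hμ (hμ.trans_le ht))
  exact_mod_cast card_le_card <|
    monotone_filter_right _ fun R _ h ↦ mul_le_mul_of_nonneg_left h hlog

lemma card_filter_count_le_le (s : Finset V) {t : ℝ} (ht₀ : 0 < t)
    (ht : t ≤ expectedHits s r) :
    (#{R : Fin r → V | (#{l | R l ∈ s} : ℝ) ≤ t} : ℝ) ≤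
      Fintype.card V ^ r * exp (-(expectedHits s r * klFun (t / expectedHits s r))) := by
  have hμ := ht₀.trans_le ht
  have hlog : log (t / expectedHits s r) ≤ 0 :=
    log_nonpos (div_nonneg ht₀.le hμ.le) ((div_le_one hμ).2 ht)
  refine le_trans ?_ (card_filter_log_mul_le_mul_count_le s hμ ht₀)
  exact_mod_cast card_le_card <|
    monotone_filter_right _ fun R _ h ↦ mul_le_mul_of_nonpos_left h hlog

lemma card_filter_lt_count_le (s : Finset V) {δ c : ℝ} (hδ₀ : 0 ≤ δ) (hδ₁ : δ ≤ 1) (hc : 0 < c)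
    (hr : 0 < r) :
    (#{R : Fin r → V | (1 + δ) * (expectedHits s r + c) < #{l | R l ∈ s}} : ℝ) ≤
      Fintype.card V ^ r * exp (-(δ ^ 2 * c / 3)) := by
  rcases s.eq_empty_or_nonempty with rfl | hs
  · have hempty (R : Fin r → V) :
        ¬ (1 + δ) * (expectedHits (∅ : Finset V) r + c) < #{l | R l ∈ (∅ : Finset V)} := by
      simp [expectedHits]; positivity
    simp only [hempty, filter_false, card_empty, Nat.cast_zero]
    positivity
  have hμ := expectedHits_pos hs hr
  calc (#{R : Fin r → V | (1 + δ) * (expectedHits s r + c) < #{l | R l ∈ s}} : ℝ)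
      ≤ #{R : Fin r → V | (1 + δ) * (expectedHits s r + c) ≤ #{l | R l ∈ s}} := by
        exact_mod_cast card_le_card (monotone_filter_right _ fun R _ ↦ le_of_lt)
    _ ≤ _ := card_filter_le_count_le s hμ (by nlinarith)
    _ ≤ _ := by gcongr; exact sq_mul_div_three_le_mul_klFun hμ hc.le hδ₀ hδ₁

lemma card_filter_count_lt_le (s : Finset V) {δ c : ℝ} (hδ₀ : 0 ≤ δ) (hδ₁ : δ ≤ 1) (hc : 0 ≤ c) :
    (#{R : Fin r → V | (#{l | R l ∈ s} : ℝ) < (1 - δ) * (expectedHits s r - c)} : ℝ) ≤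
      Fintype.card V ^ r * exp (-(δ ^ 2 * c / 2)) := by
  by_cases ht : 0 < (1 - δ) * (expectedHits s r - c)
  · have hcμ : c < expectedHits s r := sub_pos.1 (pos_of_mul_pos_right ht (by linarith))
    calc (#{R : Fin r → V | (#{l | R l ∈ s} : ℝ) < (1 - δ) * (expectedHits s r - c)} : ℝ)
        ≤ #{R : Fin r → V | (#{l | R l ∈ s} : ℝ) ≤ (1 - δ) * (expectedHits s r - c)} := by
          exact_mod_cast card_le_card (monotone_filter_right _ fun R _ ↦ le_of_lt)
      _ ≤ _ := card_filter_count_le_le s ht (by nlinarith)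
      _ ≤ _ := by gcongr; exact sq_mul_div_two_le_mul_klFun hc hcμ hδ₀ hδ₁
  · have hempty : ∀ R : Fin r → V, ¬ (#{l | R l ∈ s} : ℝ) < (1 - δ) * (expectedHits s r - c) :=
      fun R h ↦ ht ((Nat.cast_nonneg _).trans_lt h)
    simp only [hempty, filter_false, card_empty, Nat.cast_zero]
    positivity

lemma pow_mul_one_sub_two_exp_le_card_filter_estimate [Nonempty V] (s : Finset V) {δ b : ℝ}
    (hδ₀ : 0 ≤ δ) (hδ₁ : δ ≤ 1) (hb : 0 < b) (hr : 0 < r) :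
    Fintype.card V ^ r * (1 - 2 * exp (-(δ ^ 2 * (r * b / Fintype.card V) / 3))) ≤
      #{R : Fin r → V | (1 - δ) * #s - (1 - δ) * b ≤ (Fintype.card V / r : ℝ) * #{l | R l ∈ s} ∧
        (Fintype.card V / r : ℝ) * #{l | R l ∈ s} ≤ (1 + δ) * #s + (1 + δ) * b} := by
  set c : ℝ := r * b / Fintype.card V
  have hN : (0 : ℝ) < Fintype.card V := by exact_mod_cast Fintype.card_pos
  have hr' : (0 : ℝ) < r := by exact_mod_cast hr
  have hc : 0 < c := by positivity
  have hκ : (0 : ℝ) < Fintype.card V / r := by positivity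
  have hlower :
      (1 - δ) * #s - (1 - δ) * b = Fintype.card V / r * ((1 - δ) * (expectedHits s r - c)) := by
    simp only [c, expectedHits]; field_simp
  have hupper :
      (1 + δ) * #s + (1 + δ) * b = Fintype.card V / r * ((1 + δ) * (expectedHits s r + c)) := by
    simp only [c, expectedHits]; field_simp
  simp_rw [hlower, hupper, mul_le_mul_iff_of_pos_left hκ]
  have hcover := card_le_card_filter_and_add_card_filter_not
    (fun R : Fin r → V ↦ (1 - δ) * (expectedHits s r - c) ≤ #{l | R l ∈ s})
    (fun R : Fin r → V ↦ (#{l | R l ∈ s} : ℝ) ≤ (1 + δ) * (expectedHits s r + c))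
  simp only [not_le, Fintype.card_fun, Fintype.card_fin] at hcover
  have hL := card_filter_count_lt_le s hδ₀ hδ₁ hc.le (r := r)
  have hU := card_filter_lt_count_le s hδ₀ hδ₁ hc hr
  have hexp : (Fintype.card V : ℝ) ^ r * exp (-(δ ^ 2 * c / 2)) ≤
      Fintype.card V ^ r * exp (-(δ ^ 2 * c / 3)) := by
    gcongr; linarith [show 0 ≤ δ ^ 2 * c by positivity]
  have hcover' := (Nat.cast_le (α := ℝ)).2 hcover
  push_cast at hcover'
  linarith

end Sampling

open Classical in
/-- Exhaustive-sampling estimation lemma for Max-Cut: for a sample of size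
    r ≥ C·n·ln(n)/(α1²·α2·Δ), the sampled estimation ρ_j of ρ̂_j = Σ_{i∈N(j)} x_i
    satisfies (1−α1)ρ̂_j − (1−α1)α2Δ ≤ ρ_j ≤ (1+α1)ρ̂_j + (1+α1)α2Δ
    with probability at least 1 − 2/n³. -/
theorem maxcut_sampling_lemma :
    ∃ C : ℝ, 0 < C ∧
      ∀ (n m : ℕ) (G : SimpleGraph (Fin n)),
        G.edgeFinset.card = m → 1 ≤ m →
        ∀ (x : Fin n → ℝ), (∀ i, x i = 0 ∨ x i = 1) →
        ∀ (α1 α2 : ℝ), 0 < α1 → α1 < 1 → 0 < α2 →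
        ∀ (r : ℕ), 1 ≤ r →
          C * n * Real.log n / (α1 ^ 2 * α2 * (2 * m / n)) ≤ (r : ℝ) →
        ∀ (j : Fin n),
          (1 : ℝ) - 2 / (n : ℝ) ^ 3 ≤
            ((Finset.univ.filter fun R : Fin r → Fin n =>
                (1 - α1) * (∑ i ∈ G.neighborFinset j, x i)
                    - (1 - α1) * α2 * (2 * m / n) ≤
                  ((n : ℝ) / r) * ∑ l, (if R l ∈ G.neighborFinset j then x (R l) else 0) ∧
                ((n : ℝ) / r) * ∑ l, (if R l ∈ G.neighborFinset j then x (R l) else 0) ≤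
                  (1 + α1) * (∑ i ∈ G.neighborFinset j, x i)
                    + (1 + α1) * α2 * (2 * m / n)).card : ℝ) / (n : ℝ) ^ r := by
  refine ⟨9, by norm_num, ?_⟩
  intro n m G hGm hm x hx α1 α2 hα1 hα1' hα2 r hr hrC j
  have hn : 0 < n := by
    have h := G.card_edgeFinset_le_card_choose_two
    rw [Fintype.card_fin, hGm] at h
    exact Nat.pos_of_ne_zero fun h0 ↦ by simp [h0] at h; omega
  have : Nonempty (Fin n) := ⟨⟨0, hn⟩⟩
  have hn0 : (0 : ℝ) < n := by exact_mod_cast hn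
  have hΔ : (0 : ℝ) < 2 * m / n := by
    have : (0 : ℝ) < m := by exact_mod_cast hm
    positivity
  have hexp : exp (-(α1 ^ 2 * (r * (α2 * (2 * m / n)) / n) / 3)) ≤ ((n : ℝ) ^ 3)⁻¹ := by
    refine exp_neg_le_inv_pow hn0 3 ?_
    have h9 := (div_le_iff₀ (by positivity)).1 hrC
    rw [show α1 ^ 2 * (r * (α2 * (2 * m / n)) / n) = r * (α1 ^ 2 * α2 * (2 * m / n)) / n by ring,
      le_div_iff₀ (by norm_num), le_div_iff₀ hn0]
    push_cast
    linarith
  have key := pow_mul_one_sub_two_exp_le_card_filter_estimate {i ∈ G.neighborFinset j | x i = 1}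
    hα1.le hα1'.le (mul_pos hα2 hΔ) hr
  simp only [Fintype.card_fin] at key
  simp_rw [ite_mem_eq_ite_mem_filter_eq_one hx, sum_boole, sum_eq_card_filter_eq_one hx]
  rw [le_div_iff₀ (by positivity)]
  refine le_trans ?_ (key.trans_eq ?_)
  · rw [mul_comm, div_eq_mul_inv]
    gcongr
  · simp only [mul_assoc]
end

section
/- Let G be a graph with vertex set {1,…,n} and m edges, let ε1, ε2 > 0, and let Δ = 2m/n. Let ρ_1,…,ρ_n be reals with 0 ≤ ρ_j ≤ deg(j) for every j, and let y ∈ [0,1]^n satisfy, for every vertex j, (1−ε1)·ρ_j − ε2·Δ ≤ Σ_{i∈N(j)} y_i ≤ (1+ε1)·ρ_j + ε2·Δ. Define p(y) = Σ_{j=1}^n y_j·(deg(j) − Σ_{i∈N(j)} y_i). Then |p(y) − Σ_{j=1}^n y_j·(deg(j) − ρ_j)| ≤ 2(ε1 + ε2)·m. -/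
/-!
Subtracting the LP objective from p(y) leaves `∑ j, y j * (ρ j - ∑ i ∈ N(j), y i)`. The constraints
say `|ρ j - ∑ i ∈ N(j), y i| ≤ ε1 ρ j + ε2 Δ`, and `0 ≤ y j ≤ 1`, so the sum is at most
`ε1 ∑ j, ρ j + n ε2 Δ ≤ ε1 · 2m + ε2 · 2m`, using `ρ j ≤ deg j` and the handshake lemma.
-/

open Finset

lemma abs_sum_mul_le_of_abs_le_one {ι : Type*} (s : Finset ι) (y f c : ι → ℝ)
    (hy : ∀ i ∈ s, |y i| ≤ 1) (hf : ∀ i ∈ s, |f i| ≤ c i) :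
    |∑ i ∈ s, y i * f i| ≤ ∑ i ∈ s, c i := by
  refine (abs_sum_le_sum_abs _ _).trans (sum_le_sum fun i hi => ?_)
  rw [abs_mul]
  calc |y i| * |f i| ≤ 1 * c i :=
        mul_le_mul (hy i hi) (hf i hi) (abs_nonneg _) zero_le_one
    _ = c i := one_mul _

namespace SimpleGraph

variable {V : Type*} [Fintype V] (G : SimpleGraph V) [DecidableRel G.Adj]

lemma sum_le_two_mul_card_edgeFinset_of_le_degree (f : V → ℝ) (hf : ∀ v, f v ≤ G.degree v) :
    ∑ v, f v ≤ 2 * #G.edgeFinset :=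
  calc ∑ v, f v ≤ ∑ v, (G.degree v : ℝ) := sum_le_sum fun v _ => hf v
    _ = 2 * #G.edgeFinset := by exact_mod_cast G.sum_degrees_eq_twice_card_edges

lemma card_mul_two_mul_card_edgeFinset_div_card :
    (Fintype.card V : ℝ) * (2 * #G.edgeFinset / Fintype.card V) = 2 * #G.edgeFinset := by
  rcases isEmpty_or_nonempty V with hV | hV
  · simp [Finset.eq_empty_of_isEmpty G.edgeFinset]
  · exact mul_div_cancel₀ _ (Nat.cast_ne_zero.mpr Fintype.card_ne_zero)

end SimpleGraph

open Classical in
theorem maxcut_lp_value_general (n m : ℕ) (G : SimpleGraph (Fin n)) (hm : G.edgeFinset.card = m)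
    (ε1 ε2 : ℝ) (hε1 : 0 < ε1)
    (ρ : Fin n → ℝ) (hρ : ∀ j, 0 ≤ ρ j ∧ ρ j ≤ (G.degree j : ℝ))
    (y : Fin n → ℝ) (hy : ∀ j, 0 ≤ y j ∧ y j ≤ 1)
    (hcon : ∀ j,
      (1 - ε1) * ρ j - ε2 * (2 * m / n) ≤ ∑ i ∈ G.neighborFinset j, y i ∧
      ∑ i ∈ G.neighborFinset j, y i ≤ (1 + ε1) * ρ j + ε2 * (2 * m / n)) :
    |(∑ j, y j * ((G.degree j : ℝ) - ∑ i ∈ G.neighborFinset j, y i)) -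
      ∑ j, y j * ((G.degree j : ℝ) - ρ j)| ≤ 2 * (ε1 + ε2) * m := by
  subst hm
  have hdiff : (∑ j, y j * ((G.degree j : ℝ) - ∑ i ∈ G.neighborFinset j, y i)) -
      ∑ j, y j * ((G.degree j : ℝ) - ρ j) =
      ∑ j, y j * (ρ j - ∑ i ∈ G.neighborFinset j, y i) := by
    rw [← sum_sub_distrib]
    exact sum_congr rfl fun j _ => by ring
  have hρsum := G.sum_le_two_mul_card_edgeFinset_of_le_degree ρ fun j => (hρ j).2
  have hΔ := G.card_mul_two_mul_card_edgeFinset_div_card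
  rw [Fintype.card_fin] at hΔ
  rw [hdiff]
  refine (abs_sum_mul_le_of_abs_le_one univ y _ (fun j => ε1 * ρ j + ε2 * (2 * #G.edgeFinset / n))
    (fun j _ => abs_le.2 ⟨by linarith [(hy j).1], (hy j).2⟩)
    (fun j _ => abs_le.2 ⟨by linarith [(hcon j).2], by linarith [(hcon j).1]⟩)).trans ?_
  rw [sum_add_distrib, ← mul_sum, sum_const, card_univ, Fintype.card_fin, nsmul_eq_mul,
    mul_left_comm, hΔ]
  linarith [mul_le_mul_of_nonneg_left hρsum hε1.le]

open Classical in
/-- The cut value p(y) of any feasible solution y of (LP) is within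
    2(ε1+ε2)m of its LP objective value Σ_j y_j(deg(j) − ρ_j). -/
theorem maxcut_lp_value (n m : ℕ) (G : SimpleGraph (Fin n)) (hm : G.edgeFinset.card = m)
    (ε1 ε2 : ℝ) (hε1 : 0 < ε1) (hε2 : 0 < ε2)
    (ρ : Fin n → ℝ) (hρ : ∀ j, 0 ≤ ρ j ∧ ρ j ≤ (G.degree j : ℝ))
    (y : Fin n → ℝ) (hy : ∀ j, 0 ≤ y j ∧ y j ≤ 1)
    (hcon : ∀ j,
      (1 - ε1) * ρ j - ε2 * (2 * m / n) ≤ ∑ i ∈ G.neighborFinset j, y i ∧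
      ∑ i ∈ G.neighborFinset j, y i ≤ (1 + ε1) * ρ j + ε2 * (2 * m / n)) :
    |(∑ j, y j * ((G.degree j : ℝ) - ∑ i ∈ G.neighborFinset j, y i)) -
      ∑ j, y j * ((G.degree j : ℝ) - ρ j)| ≤ 2 * (ε1 + ε2) * m :=
  maxcut_lp_value_general n m G hm ε1 ε2 hε1 ρ hρ y hy hcon
end

section
/- Let G be a graph with vertex set {1,…,n} and m edges, let ε1, ε2 > 0, Δ = 2m/n, and assume 8·n·ln(n) ≤ ε1²·m and ε2·m ≥ 1. Let ρ_1,…,ρ_n be reals with 0 ≤ ρ_j ≤ deg(j) for every j. Suppose z ∈ {0,1}^n satisfies, for every vertex j, (1−ε1)·ρ_j − ε2·Δ − 2√(deg(j)·ln n) ≤ Σ_{i∈N(j)} z_i ≤ (1+ε1)·ρ_j + ε2·Δ + 2√(deg(j)·ln n), and y ∈ [0,1]^n satisfies |Σ_j z_j·(deg(j) − ρ_j) − Σ_j y_j·(deg(j) − ρ_j)| ≤ 1. Define p(z) = Σ_{j=1}^n z_j·(deg(j) − Σ_{i∈N(j)} z_i). Then |p(z) − Σ_{j=1}^n y_j·(deg(j)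 − ρ_j)| ≤ 3(ε1 + ε2)·m. -/
/-! Write `s_j = ∑_{i ∈ N(j)} z_i`. Then `p(z) - ∑_j z_j (deg j - ρ_j) = ∑_j z_j (ρ_j - s_j)`,
and the rounding constraints bound each summand by `ε₁ ρ_j + ε₂ Δ + 2 √(deg j · ln n)`. Summed
over `j`, the first two terms give `2 ε₁ m + 2 ε₂ m` since `∑ ρ_j ≤ ∑ deg j = 2m`, and by
Cauchy–Schwarz `∑ √(deg j · ln n) ≤ √(2 n m ln n) ≤ ε₁ m / 2`. The remaining error is at most
`1 ≤ ε₂ m`. -/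

open Finset

namespace Real

variable {ι : Type*}

theorem sum_sqrt_le_sqrt_card_mul_sum (s : Finset ι) {f : ι → ℝ} (hf : ∀ i, 0 ≤ f i) :
    ∑ i ∈ s, √(f i) ≤ √(#s * ∑ i ∈ s, f i) := by
  have h := sum_sqrt_mul_sqrt_le s hf (g := fun _ ↦ 1) fun _ ↦ zero_le_one
  simp only [sqrt_one, mul_one, sum_const, nsmul_eq_mul] at h
  rwa [← sqrt_mul (sum_nonneg fun i _ ↦ hf i), mul_comm] at h

theorem sum_sqrt_mul_le_of_le_sq_mul (s : Finset ι) {d : ι → ℝ} {L M ε : ℝ}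
    (hd : ∀ i, 0 ≤ d i) (hL : 0 ≤ L) (hM : 0 ≤ M) (hε : 0 ≤ ε)
    (hsum : ∑ i ∈ s, d i = 2 * M) (h : 8 * #s * L ≤ ε ^ 2 * M) :
    ∑ i ∈ s, √(d i * L) ≤ ε * M / 2 := by
  refine (sum_sqrt_le_sqrt_card_mul_sum s fun i ↦ mul_nonneg (hd i) hL).trans ?_
  rw [← sum_mul, hsum, sqrt_le_iff]
  exact ⟨by positivity, by nlinarith [mul_le_mul_of_nonneg_right h hM]⟩

end Real

section Rounding

variable {ι : Type*}

theorem abs_mul_sub_le_of_mem_bounds {z ρ s ε D : ℝ} (hz : z = 0 ∨ z = 1)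
    (hlo : (1 - ε) * ρ - D ≤ s) (hhi : s ≤ (1 + ε) * ρ + D) :
    |z * (ρ - s)| ≤ ε * ρ + D := by
  rcases hz with rfl | rfl
  · rw [zero_mul, abs_zero]
    linarith
  · rw [one_mul, abs_le]
    constructor <;> linarith

theorem abs_sum_mul_sub_le_of_mem_bounds (s : Finset ι) {z ρ t D : ι → ℝ} {ε : ℝ}
    (hz : ∀ i, z i = 0 ∨ z i = 1) (hlo : ∀ i, (1 - ε) * ρ i - D i ≤ t i)
    (hhi : ∀ i, t i ≤ (1 + ε) * ρ i + D i) :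
    |∑ i ∈ s, z i * (ρ i - t i)| ≤ ε * ∑ i ∈ s, ρ i + ∑ i ∈ s, D i := by
  rw [mul_sum, ← sum_add_distrib]
  exact (abs_sum_le_sum_abs _ _).trans
    (sum_le_sum fun i _ ↦ abs_mul_sub_le_of_mem_bounds (hz i) (hlo i) (hhi i))

end Rounding

open Classical in
theorem maxcut_rounded_value_general (n m : ℕ) (G : SimpleGraph (Fin n)) (hm : G.edgeFinset.card = m)
    (ε1 ε2 : ℝ) (hε1 : 0 < ε1)
    (hlog : 8 * n * Real.log n ≤ ε1 ^ 2 * m) (hε2m : 1 ≤ ε2 * m)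
    (ρ : Fin n → ℝ) (hρ : ∀ j, 0 ≤ ρ j ∧ ρ j ≤ (G.degree j : ℝ))
    (z : Fin n → ℝ) (hz01 : ∀ j, z j = 0 ∨ z j = 1)
    (hzcon : ∀ j,
      (1 - ε1) * ρ j - ε2 * (2 * m / n)
          - 2 * Real.sqrt ((G.degree j : ℝ) * Real.log n) ≤
        ∑ i ∈ G.neighborFinset j, z i ∧
      ∑ i ∈ G.neighborFinset j, z i ≤
        (1 + ε1) * ρ j + ε2 * (2 * m / n)
          + 2 * Real.sqrt ((G.degree j : ℝ) * Real.log n))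
    (y : Fin n → ℝ)
    (hclose : |(∑ j, z j * ((G.degree j : ℝ) - ρ j)) -
        ∑ j, y j * ((G.degree j : ℝ) - ρ j)| ≤ 1) :
    |(∑ j, z j * ((G.degree j : ℝ) - ∑ i ∈ G.neighborFinset j, z i)) -
      ∑ j, y j * ((G.degree j : ℝ) - ρ j)| ≤ 3 * (ε1 + ε2) * m := by
  have hdeg : ∑ j, (G.degree j : ℝ) = 2 * m := by
    exact_mod_cast hm ▸ G.sum_degrees_eq_twice_card_edges
  have hm0 : (m : ℝ) ≠ 0 := fun h ↦ by rw [h, mul_zero] at hε2m; linarith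
  have hn0 : (n : ℝ) ≠ 0 := by
    rintro h
    obtain rfl : n = 0 := by exact_mod_cast h
    simp [eq_comm, hm0] at hdeg
  have hρsum : ∑ j, ρ j ≤ 2 * m := hdeg ▸ sum_le_sum fun j _ ↦ (hρ j).2
  have hsqrt : ∑ j, √((G.degree j : ℝ) * Real.log n) ≤ ε1 * m / 2 :=
    Real.sum_sqrt_mul_le_of_le_sq_mul univ (fun j ↦ Nat.cast_nonneg _)
      (Real.log_natCast_nonneg n) (Nat.cast_nonneg m) hε1.le hdeg (by simpa using hlog)
  have hdev := abs_sum_mul_sub_le_of_mem_bounds univ hz01 (ε := ε1) (ρ := ρ)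
    (t := fun j ↦ ∑ i ∈ G.neighborFinset j, z i)
    (D := fun j ↦ ε2 * (2 * m / n) + 2 * √((G.degree j : ℝ) * Real.log n))
    (fun j ↦ by linarith [(hzcon j).1]) (fun j ↦ by linarith [(hzcon j).2])
  have hDsum : ∑ j : Fin n, (ε2 * (2 * m / n) + 2 * √((G.degree j : ℝ) * Real.log n))
      = 2 * ε2 * m + 2 * ∑ j, √((G.degree j : ℝ) * Real.log n) := by
    rw [sum_add_distrib, sum_const, card_univ, Fintype.card_fin, nsmul_eq_mul, ← mul_sum]
    congr 1
    field_simp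
  calc _ ≤ |(∑ j, z j * ((G.degree j : ℝ) - ∑ i ∈ G.neighborFinset j, z i))
          - ∑ j, z j * ((G.degree j : ℝ) - ρ j)|
        + |(∑ j, z j * ((G.degree j : ℝ) - ρ j)) - ∑ j, y j * ((G.degree j : ℝ) - ρ j)| :=
        abs_sub_le _ _ _
    _ = |∑ j, z j * (ρ j - ∑ i ∈ G.neighborFinset j, z i)|
        + |(∑ j, z j * ((G.degree j : ℝ) - ρ j))
          - ∑ j, y j * ((G.degree j : ℝ) - ρ j)| := by
        simp only [← sum_sub_distrib, ← mul_sub, sub_sub_sub_cancel_left]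
    _ ≤ 3 * (ε1 + ε2) * m := by
        linarith [mul_le_mul_of_nonneg_left hρsum hε1.le]

open Classical in
/-- The cut value p(z) of the rounded solution z is within 3(ε1+ε2)m of the
    LP objective value of the fractional solution y. -/
theorem maxcut_rounded_value (n m : ℕ) (G : SimpleGraph (Fin n)) (hm : G.edgeFinset.card = m)
    (ε1 ε2 : ℝ) (hε1 : 0 < ε1) (hε2 : 0 < ε2)
    (hlog : 8 * n * Real.log n ≤ ε1 ^ 2 * m) (hε2m : 1 ≤ ε2 * m)
    (ρ : Fin n → ℝ) (hρ : ∀ j, 0 ≤ ρ j ∧ ρ j ≤ (G.degree j : ℝ))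
    (z : Fin n → ℝ) (hz01 : ∀ j, z j = 0 ∨ z j = 1)
    (hzcon : ∀ j,
      (1 - ε1) * ρ j - ε2 * (2 * m / n)
          - 2 * Real.sqrt ((G.degree j : ℝ) * Real.log n) ≤
        ∑ i ∈ G.neighborFinset j, z i ∧
      ∑ i ∈ G.neighborFinset j, z i ≤
        (1 + ε1) * ρ j + ε2 * (2 * m / n)
          + 2 * Real.sqrt ((G.degree j : ℝ) * Real.log n))
    (y : Fin n → ℝ) (hy : ∀ j, 0 ≤ y j ∧ y j ≤ 1)
    (hclose : |(∑ j, z j * ((G.degree j : ℝ) - ρ j)) -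
        ∑ j, y j * ((G.degree j : ℝ) - ρ j)| ≤ 1) :
    |(∑ j, z j * ((G.degree j : ℝ) - ∑ i ∈ G.neighborFinset j, z i)) -
      ∑ j, y j * ((G.degree j : ℝ) - ρ j)| ≤ 3 * (ε1 + ε2) * m :=
  maxcut_rounded_value_general n m G hm ε1 ε2 hε1 hlog hε2m ρ hρ z hz01 hzcon y hclose
end

section
/- Let n ≥ 2 be an integer, δ ∈ (0,1], let d ≥ 1 and q ≥ 0 be integers, β ≥ 1, α1 ∈ (0,1) and α2 > 0. Let x ∈ {0,1}^n and let ρ_1,…,ρ_n be reals with 0 ≤ ρ_j ≤ (q+1)·β·n^q for every j. Let γ ≥ 3(d+1)(q+1)β/(α1²·α2), let r = ⌈γ·n^{1−δ}·ln n⌉, and let R_1,…,R_r be drawn independently and uniformly at random (with replacement) from {1,…,n}. Set ρ = (n/r)·Σ_{l=1}^r ρ_{R_l}·x_{R_l} and ρ̂ = Σ_{j=1}^n ρ_j·x_j. Then with probability at least 1 − 2/n^{d+1}: (1−α1)·ρ̂ − (1−α1)·α2·n^{q+δ} ≤ ρ ≤ (1+α1)·ρ̂ + (1+α1)·α2·n^{q+δ}.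 -/
/-!
Chernoff's method, in counting form. For a sample `R` drawn with replacement the exponential
moment factorises, `∑_R exp (t ∑_l a (R l)) = (∑_j exp (t a j)) ^ r`, and convexity of `exp` on
`[0, c]` bounds it by `n ^ r exp (μ (e^{tc} - 1) / c)`, where `μ = r/n ∑_j a j` is the mean of the
sample sum. Markov's inequality at `t = ±2α/(3c)`, with `e^u ≤ 1 + u + 3u²/4` for `|u| ≤ 1`,
bounds each tail by `n ^ r exp (-α² B / (3c))`, where `B = r A / n` is the additive slack seen
by the sample sum; the sample size `r ≥ γ n^{1-δ} log n` makes `α² B / (3c) ≥ (d + 1) log n`.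
-/

open Real Finset

theorem Real.exp_le_one_add_add_three_quarters_sq {u : ℝ} (hu : |u| ≤ 1) :
    exp u ≤ 1 + u + 3 / 4 * u ^ 2 := by
  have h := (abs_le.1 (Real.exp_bound hu (n := 2) (by norm_num))).2
  norm_num [Finset.sum_range_succ, sq_abs] at h
  linarith

theorem Real.exp_mul_le_of_mem_Icc {t a c : ℝ} (hc : 0 < c) (ha₀ : 0 ≤ a) (hac : a ≤ c) :
    exp (t * a) ≤ 1 + a * ((exp (t * c) - 1) / c) := by
  have hθ : a / c ≤ 1 := (div_le_one hc).2 hac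
  have h := convexOn_exp.2 (Set.mem_univ 0) (Set.mem_univ (t * c))
    (sub_nonneg.2 hθ) (div_nonneg ha₀ hc.le) (by ring)
  have hpt : (1 - a / c) • (0 : ℝ) + (a / c) • (t * c) = t * a := by
    simp only [smul_eq_mul]; field_simp; ring
  rw [hpt] at h
  simp only [smul_eq_mul, exp_zero] at h
  linarith [show a * ((exp (t * c) - 1) / c) = a / c * exp (t * c) - a / c by ring]

section Sampling

variable {ι : Type*} [Fintype ι] {c : ℝ} {a : ι → ℝ}

theorem sum_exp_mul_sum_le [Nonempty ι] (hc : 0 < c) (ha : ∀ j, 0 ≤ a j ∧ a j ≤ c)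
    (r : ℕ) (t : ℝ) :
    ∑ R : Fin r → ι, exp (t * ∑ l, a (R l)) ≤
      (Fintype.card ι : ℝ) ^ r *
        exp (r * (∑ j, a j) / Fintype.card ι * ((exp (t * c) - 1) / c)) := by
  set n : ℝ := (Fintype.card ι : ℝ) with hn_def
  set κ := (exp (t * c) - 1) / c
  have hn : 0 < n := by positivity
  have hsingle : ∑ j, exp (t * a j) ≤ n * exp ((∑ j, a j) / n * κ) :=
    calc ∑ j, exp (t * a j) ≤ ∑ j, (1 + a j * κ) :=
          sum_le_sum fun j _ => exp_mul_le_of_mem_Icc hc (ha j).1 (ha j).2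
      _ = n * (1 + (∑ j, a j) / n * κ) := by
          rw [sum_add_distrib, ← sum_mul, sum_const, card_univ, nsmul_one, ← hn_def]
          field_simp
      _ ≤ n * exp ((∑ j, a j) / n * κ) := by
          gcongr; linarith [add_one_le_exp ((∑ j, a j) / n * κ)]
  calc ∑ R : Fin r → ι, exp (t * ∑ l, a (R l)) = (∑ j, exp (t * a j)) ^ r := by
        simp only [mul_sum, exp_sum, Fintype.sum_pow]
    _ ≤ (n * exp ((∑ j, a j) / n * κ)) ^ r :=
        pow_le_pow_left₀ (sum_nonneg fun j _ => (exp_pos _).le) hsingle r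
    _ = n ^ r * exp (r * (∑ j, a j) / n * κ) := by
        rw [mul_pow, ← exp_nat_mul]; ring_nf

theorem card_filter_le_exp_of_imp [Nonempty ι] (hc : 0 < c) (ha : ∀ j, 0 ≤ a j ∧ a j ≤ c)
    {r : ℕ} (P : (Fin r → ι) → Prop) [DecidablePred P] {t s : ℝ}
    (hP : ∀ R, P R → t * s ≤ t * ∑ l, a (R l)) :
    (#{R | P R} : ℝ) ≤ (Fintype.card ι : ℝ) ^ r *
      exp (r * (∑ j, a j) / Fintype.card ι * ((exp (t * c) - 1) / c) - t * s) := by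
  rw [exp_sub, ← mul_div_assoc, le_div_iff₀ (exp_pos _)]
  calc (#{R | P R} : ℝ) * exp (t * s) ≤ ∑ R ∈ {R | P R}, exp (t * ∑ l, a (R l)) := by
        rw [← nsmul_eq_mul]
        exact card_nsmul_le_sum _ _ _ fun R hR => exp_le_exp.2 (hP R (mem_filter.1 hR).2)
    _ ≤ ∑ R : Fin r → ι, exp (t * ∑ l, a (R l)) :=
        sum_le_sum_of_subset_of_nonneg (filter_subset _ _) fun _ _ _ => (exp_pos _).le
    _ ≤ _ := sum_exp_mul_sum_le hc ha r t

theorem upper_tail_exponent_le {α μ B : ℝ} (hα : 0 ≤ α) (hα₁ : α ≤ 1) (hμ : 0 ≤ μ)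
    (hB : 0 ≤ B) :
    μ * (exp (2 * α / 3) - 1) - 2 * α / 3 * ((1 + α) * μ + (1 + α) * B) ≤ -(α ^ 2 * B / 3) := by
  have hu := exp_le_one_add_add_three_quarters_sq (u := 2 * α / 3)
    (by rw [abs_le]; constructor <;> linarith)
  nlinarith [mul_le_mul_of_nonneg_left hu hμ, mul_nonneg hB hα, mul_nonneg hB (sq_nonneg α),
    mul_nonneg hμ (sq_nonneg α)]

theorem lower_tail_exponent_le {α μ B : ℝ} (hα : 0 ≤ α) (hα₁ : α ≤ 1) (hB : 0 ≤ B) (hBμ : B ≤ μ) :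
    μ * (exp (-(2 * α / 3)) - 1) + 2 * α / 3 * ((1 - α) * μ - (1 - α) * B) ≤
      -(α ^ 2 * B / 3) := by
  have hu := exp_le_one_add_add_three_quarters_sq (u := -(2 * α / 3))
    (by rw [abs_le]; constructor <;> linarith)
  nlinarith [mul_le_mul_of_nonneg_left hu (hB.trans hBμ),
    mul_nonneg (mul_nonneg hα hB) (sub_nonneg.2 hα₁),
    mul_le_mul_of_nonneg_left hBμ (sq_nonneg α)]

theorem card_filter_lt_estimate_le [Nonempty ι] (hc : 0 < c) (ha : ∀ j, 0 ≤ a j ∧ a j ≤ c)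
    {r : ℕ} (hr : 0 < r) {α A : ℝ} (hα : 0 ≤ α) (hα₁ : α ≤ 1) (hA : 0 ≤ A) :
    (#{R : Fin r → ι | (1 + α) * ∑ j, a j + (1 + α) * A <
        (Fintype.card ι / r : ℝ) * ∑ l, a (R l)} : ℝ) ≤
      (Fintype.card ι : ℝ) ^ r * exp (-(α ^ 2 * (r * A / Fintype.card ι) / (3 * c))) := by
  set n : ℝ := (Fintype.card ι : ℝ)
  set m := ∑ j, a j
  have hn : 0 < n := by positivity
  have hm : 0 ≤ m := sum_nonneg fun j _ => (ha j).1
  refine (card_filter_le_exp_of_imp hc ha _ (t := 2 * α / 3 / c)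
    (s := r / n * ((1 + α) * m + (1 + α) * A)) fun R hR => ?_).trans ?_
  · have h : r / n * ((1 + α) * m + (1 + α) * A) < ∑ l, a (R l) := by
      rwa [← lt_div_iff₀' (by positivity), div_div_eq_mul_div, mul_comm (∑ l, a (R l)),
        mul_div_right_comm]
    exact mul_le_mul_of_nonneg_left h.le (by positivity)
  gcongr
  rw [div_mul_cancel₀ _ hc.ne']
  calc _ = (r * m / n * (exp (2 * α / 3) - 1) -
          2 * α / 3 * ((1 + α) * (r * m / n) + (1 + α) * (r * A / n))) / c := by
        ring
    _ ≤ -(α ^ 2 * (r * A / n) / 3) / c := by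
        gcongr
        exact upper_tail_exponent_le hα hα₁ (by positivity) (by positivity)
    _ = -(α ^ 2 * (r * A / n) / (3 * c)) := by ring

theorem card_filter_estimate_lt_le [Nonempty ι] (hc : 0 < c) (ha : ∀ j, 0 ≤ a j ∧ a j ≤ c)
    {r : ℕ} (hr : 0 < r) {α A : ℝ} (hα : 0 ≤ α) (hα₁ : α ≤ 1) (hA : 0 ≤ A) :
    (#{R : Fin r → ι | (Fintype.card ι / r : ℝ) * ∑ l, a (R l) <
        (1 - α) * ∑ j, a j - (1 - α) * A} : ℝ) ≤
      (Fintype.card ι : ℝ) ^ r * exp (-(α ^ 2 * (r * A / Fintype.card ι) / (3 * c))) := by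
  set n : ℝ := (Fintype.card ι : ℝ)
  set m := ∑ j, a j
  have hn : 0 < n := by positivity
  -- If `m ≤ A` the lower threshold is nonpositive and the strict lower tail is empty.
  rcases le_total m A with hmA | hAm
  · rw [filter_eq_empty_iff.2 fun R _ => ?_, card_empty, Nat.cast_zero]
    · positivity
    have hthreshold : (1 - α) * m - (1 - α) * A ≤ 0 := by nlinarith
    have hestimate : 0 ≤ n / r * ∑ l, a (R l) :=
      mul_nonneg (by positivity) (sum_nonneg fun l _ => (ha _).1)
    linarith
  refine (card_filter_le_exp_of_imp hc ha _ (t := -(2 * α / 3 / c))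
    (s := r / n * ((1 - α) * m - (1 - α) * A)) fun R hR => ?_).trans ?_
  · have h : ∑ l, a (R l) < r / n * ((1 - α) * m - (1 - α) * A) := by
      rwa [← div_lt_iff₀' (by positivity), div_div_eq_mul_div, mul_comm (∑ l, a (R l)),
        mul_div_right_comm]
    exact mul_le_mul_of_nonpos_left h.le (by simp only [neg_nonpos]; positivity)
  gcongr
  rw [neg_mul, div_mul_cancel₀ _ hc.ne']
  calc _ = (r * m / n * (exp (-(2 * α / 3)) - 1) +
          2 * α / 3 * ((1 - α) * (r * m / n) - (1 - α) * (r * A / n))) / c := by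
        ring
    _ ≤ -(α ^ 2 * (r * A / n) / 3) / c := by
        gcongr
        exact lower_tail_exponent_le hα hα₁ (by positivity) (by gcongr)
    _ = -(α ^ 2 * (r * A / n) / (3 * c)) := by ring

theorem card_filter_estimate_mem_Icc_ge [Nonempty ι] (hc : 0 < c)
    (ha : ∀ j, 0 ≤ a j ∧ a j ≤ c) {r : ℕ} (hr : 0 < r) {α A : ℝ} (hα : 0 ≤ α) (hα₁ : α ≤ 1)
    (hA : 0 ≤ A) :
    (Fintype.card ι : ℝ) ^ r * (1 - 2 * exp (-(α ^ 2 * (r * A / Fintype.card ι) / (3 * c)))) ≤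
      #{R : Fin r → ι | (1 - α) * ∑ j, a j - (1 - α) * A ≤
          (Fintype.card ι / r : ℝ) * ∑ l, a (R l) ∧
        (Fintype.card ι / r : ℝ) * ∑ l, a (R l) ≤ (1 + α) * ∑ j, a j + (1 + α) * A} := by
  set n : ℝ := (Fintype.card ι : ℝ)
  set L := (1 - α) * ∑ j, a j - (1 - α) * A
  set U := (1 + α) * ∑ j, a j + (1 + α) * A
  set est : (Fin r → ι) → ℝ := fun R => n / r * ∑ l, a (R l)
  have htotal : (#{R | L ≤ est R ∧ est R ≤ U} : ℝ) + #{R | ¬(L ≤ est R ∧ est R ≤ U)} = n ^ r := by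
    rw [← Nat.cast_add, card_filter_add_card_filter_not, card_univ, Fintype.card_fun,
      Fintype.card_fin, Nat.cast_pow]
  have hbad : (#{R | ¬(L ≤ est R ∧ est R ≤ U)} : ℝ) ≤ #{R | est R < L} + #{R | U < est R} := by
    classical
    simp only [not_and_or, not_le, filter_or]
    exact_mod_cast card_union_le _ _
  have hlower := card_filter_estimate_lt_le hc ha hr hα hα₁ hA
  have hupper := card_filter_lt_estimate_le hc ha hr hα hα₁ hA
  linarith

end Sampling

theorem add_one_mul_log_le_sampling_exponent {n d q r : ℕ} {δ β α1 α2 γ : ℝ} (hn : 0 < n)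
    (hβ : 0 < β) (hα1 : 0 < α1) (hα2 : 0 < α2)
    (hγ : 3 * ((d : ℝ) + 1) * ((q : ℝ) + 1) * β / (α1 ^ 2 * α2) ≤ γ)
    (hr : γ * (n : ℝ) ^ ((1 : ℝ) - δ) * log n ≤ r) :
    ((d : ℝ) + 1) * log n ≤
      α1 ^ 2 * (r * (α2 * (n : ℝ) ^ ((q : ℝ) + δ)) / n) /
        (3 * (((q : ℝ) + 1) * β * (n : ℝ) ^ q)) := by
  have hn₀ : (0 : ℝ) < n := Nat.cast_pos.2 hn
  have hlog : 0 ≤ log n := log_natCast_nonneg n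
  have hpow : (n : ℝ) ^ ((1 : ℝ) - δ) * (n : ℝ) ^ ((q : ℝ) + δ) = n ^ q * n := by
    rw [← rpow_add hn₀, show 1 - δ + (q + δ) = ((q + 1 : ℕ) : ℝ) by push_cast; ring,
      rpow_natCast, pow_succ]
  rw [div_le_iff₀ (by positivity)] at hγ
  calc ((d : ℝ) + 1) * log n ≤ α1 ^ 2 * α2 * γ * log n / (3 * ((q + 1) * β)) := by
        rw [le_div_iff₀ (by positivity)]
        nlinarith
    _ = α1 ^ 2 * (γ * (n : ℝ) ^ ((1 : ℝ) - δ) * log n * (α2 * (n : ℝ) ^ ((q : ℝ) + δ)) / n) /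
          (3 * ((q + 1) * β * (n : ℝ) ^ q)) := by
        rw [show γ * (n : ℝ) ^ ((1 : ℝ) - δ) * log n * (α2 * (n : ℝ) ^ ((q : ℝ) + δ)) =
          γ * log n * α2 * ((n : ℝ) ^ ((1 : ℝ) - δ) * (n : ℝ) ^ ((q : ℝ) + δ)) by ring, hpow]
        field_simp
    _ ≤ _ := by gcongr

open Classical in
theorem sampling_lemma_general (n d q : ℕ) (δ β α1 α2 γ : ℝ)
    (hn : 2 ≤ n) (hβ : 1 ≤ β)
    (hα1 : 0 < α1) (hα1' : α1 < 1) (hα2 : 0 < α2)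
    (hγ : 3 * ((d : ℝ) + 1) * ((q : ℝ) + 1) * β / (α1 ^ 2 * α2) ≤ γ)
    (x : Fin n → ℝ) (hx : ∀ i, x i = 0 ∨ x i = 1)
    (ρc : Fin n → ℝ) (hρc : ∀ j, 0 ≤ ρc j ∧ ρc j ≤ ((q : ℝ) + 1) * β * (n : ℝ) ^ q)
    (r : ℕ) (hr : r = ⌈γ * (n : ℝ) ^ ((1 : ℝ) - δ) * Real.log n⌉₊) :
    (1 : ℝ) - 2 / (n : ℝ) ^ (d + 1) ≤
      ((Finset.univ.filter fun R : Fin r → Fin n =>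
          (1 - α1) * (∑ j, ρc j * x j)
              - (1 - α1) * α2 * (n : ℝ) ^ ((q : ℝ) + δ) ≤
            ((n : ℝ) / r) * ∑ l, ρc (R l) * x (R l) ∧
          ((n : ℝ) / r) * ∑ l, ρc (R l) * x (R l) ≤
            (1 + α1) * (∑ j, ρc j * x j)
              + (1 + α1) * α2 * (n : ℝ) ^ ((q : ℝ) + δ)).card : ℝ) /
        (n : ℝ) ^ r := by
  have : NeZero n := ⟨by omega⟩
  have hn₁ : (1 : ℝ) < n := by exact_mod_cast hn
  have hc : 0 < ((q : ℝ) + 1) * β * (n : ℝ) ^ q := by positivity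
  have hγ₀ : 0 < γ := lt_of_lt_of_le (by positivity) hγ
  have hr₀ : 0 < r := hr ▸ Nat.ceil_pos.2 (by have := log_pos hn₁; positivity)
  have ha : ∀ j, 0 ≤ ρc j * x j ∧ ρc j * x j ≤ ((q : ℝ) + 1) * β * (n : ℝ) ^ q := fun j => by
    rcases hx j with h | h <;> simp [h, hc.le, hρc j]
  have hexp : exp (-(α1 ^ 2 * (r * (α2 * (n : ℝ) ^ ((q : ℝ) + δ)) / n) /
      (3 * (((q : ℝ) + 1) * β * (n : ℝ) ^ q)))) ≤ 1 / (n : ℝ) ^ (d + 1) := by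
    have h := add_one_mul_log_le_sampling_exponent (d := d) (by omega) (by linarith) hα1 hα2 hγ
      (hr ▸ Nat.le_ceil _)
    rw [one_div, ← exp_log (by positivity : (0 : ℝ) < n ^ (d + 1)), ← exp_neg, log_pow]
    gcongr
    push_cast
    linarith
  have hcount := card_filter_estimate_mem_Icc_ge hc ha hr₀ hα1.le hα1'.le
    (by positivity : 0 ≤ α2 * (n : ℝ) ^ ((q : ℝ) + δ))
  simp only [Fintype.card_fin] at hcount
  simp only [mul_assoc (1 - α1) α2, mul_assoc (1 + α1) α2]
  rw [le_div_iff₀ (by positivity)]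
  calc _ = (n : ℝ) ^ r * (1 - 2 * (1 / (n : ℝ) ^ (d + 1))) := by ring
    _ ≤ _ := by gcongr
    _ ≤ _ := hcount

open Classical in
/-- One-sided sampling lemma (nonnegative coefficients): with a sample of size
    r = ⌈γ·n^{1−δ}·ln n⌉ chosen uniformly with replacement, the estimation
    ρ = (n/r)·Σ_l ρ_{R_l}·x_{R_l} of ρ̂ = Σ_j ρ_j x_j satisfies
    (1−α1)ρ̂ − (1−α1)α2 n^{q+δ} ≤ ρ ≤ (1+α1)ρ̂ + (1+α1)α2 n^{q+δ}
    with probability at least 1 − 2/n^{d+1}. -/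
theorem sampling_lemma (n d q : ℕ) (δ β α1 α2 γ : ℝ)
    (hn : 2 ≤ n) (hδ : 0 < δ) (hδ1 : δ ≤ 1) (hd : 1 ≤ d) (hβ : 1 ≤ β)
    (hα1 : 0 < α1) (hα1' : α1 < 1) (hα2 : 0 < α2)
    (hγ : 3 * ((d : ℝ) + 1) * ((q : ℝ) + 1) * β / (α1 ^ 2 * α2) ≤ γ)
    (x : Fin n → ℝ) (hx : ∀ i, x i = 0 ∨ x i = 1)
    (ρc : Fin n → ℝ) (hρc : ∀ j, 0 ≤ ρc j ∧ ρc j ≤ ((q : ℝ) + 1) * β * (n : ℝ) ^ q)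
    (r : ℕ) (hr : r = ⌈γ * (n : ℝ) ^ ((1 : ℝ) - δ) * Real.log n⌉₊) :
    (1 : ℝ) - 2 / (n : ℝ) ^ (d + 1) ≤
      ((Finset.univ.filter fun R : Fin r → Fin n =>
          (1 - α1) * (∑ j, ρc j * x j)
              - (1 - α1) * α2 * (n : ℝ) ^ ((q : ℝ) + δ) ≤
            ((n : ℝ) / r) * ∑ l, ρc (R l) * x (R l) ∧
          ((n : ℝ) / r) * ∑ l, ρc (R l) * x (R l) ≤
            (1 + α1) * (∑ j, ρc j * x j)
              + (1 + α1) * α2 * (n : ℝ) ^ ((q : ℝ) + δ)).card : ℝ) /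
        (n : ℝ) ^ r :=
  sampling_lemma_general n d q δ β α1 α2 γ hn hβ hα1 hα1' hα2 hγ x hx ρc hρc r hr
end

section
/- Let n ≥ 2 be an integer, δ > 0, let k ≥ 1 and q ≥ 0 be integers, β ≥ 1, α ∈ (0,1), and assume n^δ/ln(n) ≥ 3(k+1)(q+1)β/α³. Let y ∈ [0,1]^n and let z_1,…,z_n be independent random variables with z_j = 1 with probability y_j and z_j = 0 otherwise. Let ρ_1,…,ρ_n be reals with 0 ≤ ρ_j ≤ (q+1)·β·n^q for every j, and set ρ = Σ_{j=1}^n ρ_j·z_j and ρ̂ = Σ_{j=1}^n ρ_j·y_j. Then with probability at least 1 − 2/n^{k+1}: (1−α)·ρ̂ − (1−α)·α·n^{q+δ} ≤ ρ ≤ (1+α)·ρ̂ + (1+α)·α·n^{q+δ}. -/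
/-!
Chernoff bounds. By independence the exponential moment of `ρ = ∑ ρ_j z_j` factors over the
coordinates, and convexity of `exp` on `[0, M]`, `M = (q+1) β n^q`, bounds each factor, giving
`E[exp (t ρ)] ≤ exp (ρ̂ (exp (t M) - 1) / M)`. Markov's inequality with `t = α / M` and
`t = -α / M` bounds each tail by `exp (-α² n^{q+δ} / (2M))`, which the hypothesis on `n^δ / ln n`
makes at most `n^{-(k+1)}`.
-/

open Finset Real

section RandomizedRounding

variable {ι : Type*} [Fintype ι]

/-- The probability of the outcome `z` when coordinate `j` is rounded to `true` with
probability `y j`. -/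
def roundingWeight (y : ι → ℝ) (z : ι → Bool) : ℝ :=
  ∏ j, if z j then y j else 1 - y j

def roundedSum (ρ : ι → ℝ) (z : ι → Bool) : ℝ :=
  ∑ j, ρ j * if z j then 1 else 0

theorem roundingWeight_nonneg {y : ι → ℝ} (hy : ∀ j, 0 ≤ y j ∧ y j ≤ 1) (z : ι → Bool) :
    0 ≤ roundingWeight y z :=
  prod_nonneg fun j _ => by split_ifs <;> linarith [hy j]

theorem roundedSum_nonneg {ρ : ι → ℝ} (hρ : ∀ j, 0 ≤ ρ j) (z : ι → Bool) :
    0 ≤ roundedSum ρ z :=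
  sum_nonneg fun j _ => mul_nonneg (hρ j) (by split_ifs <;> norm_num)

variable [DecidableEq ι]

def roundingProb (y : ι → ℝ) (P : (ι → Bool) → Prop) [DecidablePred P] : ℝ :=
  ∑ z, if P z then roundingWeight y z else 0

theorem sum_prod_bool (f : ι → Bool → ℝ) :
    ∑ z : ι → Bool, ∏ j, f j (z j) = ∏ j, (f j true + f j false) := by
  simp only [← Fintype.prod_sum, Fintype.sum_bool]

theorem sum_roundingWeight (y : ι → ℝ) : ∑ z, roundingWeight y z = 1 := by
  simp [roundingWeight, sum_prod_bool fun j b => if b then y j else 1 - y j]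

theorem sum_roundingWeight_mul_exp (y ρ : ι → ℝ) (t : ℝ) :
    ∑ z, roundingWeight y z * exp (t * roundedSum ρ z) =
      ∏ j, (1 + y j * (exp (t * ρ j) - 1)) := by
  have hfactor : ∀ z : ι → Bool, roundingWeight y z * exp (t * roundedSum ρ z) =
      ∏ j, if z j then y j * exp (t * ρ j) else 1 - y j := by
    intro z
    rw [roundingWeight, roundedSum, mul_sum, exp_sum, ← prod_mul_distrib]
    exact prod_congr rfl fun j _ => by cases z j <;> simp
  simp only [hfactor, sum_prod_bool fun j b => if b then y j * exp (t * ρ j) else 1 - y j]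
  exact prod_congr rfl fun j _ => by simp only [if_true, Bool.false_eq_true, if_false]; ring

theorem exp_mul_le_of_mem_Icc {r M : ℝ} (t : ℝ) (hM : 0 < M) (hr : 0 ≤ r) (hrM : r ≤ M) :
    exp (t * r) ≤ 1 + r / M * (exp (t * M) - 1) := by
  have h := convexOn_exp.2 (Set.mem_univ 0) (Set.mem_univ (t * M))
    (sub_nonneg.2 ((div_le_one hM).2 hrM)) (div_nonneg hr hM.le) (sub_add_cancel 1 (r / M))
  have harg : r / M * (t * M) = t * r := by field_simp
  simp only [smul_eq_mul, mul_zero, zero_add, exp_zero, mul_one, harg] at h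
  linarith

theorem one_add_mul_exp_sub_one_le {y r M : ℝ} (t : ℝ) (hM : 0 < M) (hy : 0 ≤ y) (hr : 0 ≤ r)
    (hrM : r ≤ M) :
    1 + y * (exp (t * r) - 1) ≤ exp (r * y / M * (exp (t * M) - 1)) := by
  have hconv := mul_le_mul_of_nonneg_left (exp_mul_le_of_mem_Icc t hM hr hrM) hy
  calc 1 + y * (exp (t * r) - 1) ≤ r * y / M * (exp (t * M) - 1) + 1 := by
        have : r * y / M = y * (r / M) := by ring
        rw [this]; nlinarith
    _ ≤ _ := add_one_le_exp _

theorem sum_roundingWeight_mul_exp_le {y ρ : ι → ℝ} {M : ℝ} (t : ℝ) (hM : 0 < M)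
    (hy : ∀ j, 0 ≤ y j ∧ y j ≤ 1) (hρ : ∀ j, 0 ≤ ρ j ∧ ρ j ≤ M) :
    ∑ z, roundingWeight y z * exp (t * roundedSum ρ z) ≤
      exp ((∑ j, ρ j * y j) / M * (exp (t * M) - 1)) := by
  rw [sum_roundingWeight_mul_exp, sum_div, sum_mul, exp_sum]
  refine prod_le_prod (fun j _ => ?_) fun j _ =>
    one_add_mul_exp_sub_one_le t hM (hy j).1 (hρ j).1 (hρ j).2
  nlinarith [hy j, exp_pos (t * ρ j)]

/-- Markov's inequality for the exponential moment of `f`. -/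
theorem roundingProb_le_exp_mul_sum {y : ι → ℝ} (hy : ∀ j, 0 ≤ y j ∧ y j ≤ 1)
    (f : (ι → Bool) → ℝ) {t a : ℝ} {P : (ι → Bool) → Prop} [DecidablePred P]
    (hP : ∀ z, P z → t * a ≤ t * f z) :
    roundingProb y P ≤ exp (-(t * a)) * ∑ z, roundingWeight y z * exp (t * f z) := by
  rw [roundingProb, mul_sum]
  refine sum_le_sum fun z _ => ?_
  have hw := roundingWeight_nonneg hy z
  split_ifs with h
  · calc roundingWeight y z ≤ roundingWeight y z * exp (t * f z - t * a) :=
          le_mul_of_one_le_right hw (one_le_exp (sub_nonneg.2 (hP z h)))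
      _ = _ := by rw [sub_eq_neg_add, exp_add]; ring
  · positivity

theorem roundingProb_le_exp {y ρ : ι → ℝ} {M t a : ℝ} (hM : 0 < M)
    (hy : ∀ j, 0 ≤ y j ∧ y j ≤ 1) (hρ : ∀ j, 0 ≤ ρ j ∧ ρ j ≤ M)
    {P : (ι → Bool) → Prop} [DecidablePred P] (hP : ∀ z, P z → t * a ≤ t * roundedSum ρ z) :
    roundingProb y P ≤ exp ((∑ j, ρ j * y j) / M * (exp (t * M) - 1) - t * a) :=
  calc roundingProb y P
      ≤ exp (-(t * a)) * ∑ z, roundingWeight y z * exp (t * roundedSum ρ z) :=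
        roundingProb_le_exp_mul_sum hy _ hP
    _ ≤ exp (-(t * a)) * exp ((∑ j, ρ j * y j) / M * (exp (t * M) - 1)) :=
        mul_le_mul_of_nonneg_left (sum_roundingWeight_mul_exp_le t hM hy hρ) (exp_pos _).le
    _ = _ := by rw [← exp_add]; ring_nf

theorem roundingProb_upper_tail_le {y ρ : ι → ℝ} {M α X : ℝ} (hM : 0 < M)
    (hy : ∀ j, 0 ≤ y j ∧ y j ≤ 1) (hρ : ∀ j, 0 ≤ ρ j ∧ ρ j ≤ M)
    (hα : 0 < α) (hα₁ : α ≤ 1) (hX : 0 ≤ X) :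
    roundingProb y (fun z => (1 + α) * (∑ j, ρ j * y j) + (1 + α) * α * X < roundedSum ρ z) ≤
      exp (-(α ^ 2 * X / (2 * M))) := by
  set μ := ∑ j, ρ j * y j
  have hμ : 0 ≤ μ := sum_nonneg fun j _ => mul_nonneg (hρ j).1 (hy j).1
  refine (roundingProb_le_exp (t := α / M) hM hy hρ fun z hz =>
    mul_le_mul_of_nonneg_left hz.le (div_nonneg hα.le hM.le)).trans (exp_le_exp.2 ?_)
  have hexp : exp α - 1 ≤ α * (1 + α) := by
    have := abs_exp_sub_one_sub_id_le (x := α) (by rwa [abs_of_pos hα])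
    nlinarith [le_abs_self (exp α - 1 - α)]
  rw [div_mul_cancel₀ α hM.ne',
    show μ / M * (exp α - 1) - α / M * ((1 + α) * μ + (1 + α) * α * X) =
      (μ * (exp α - 1) - α * ((1 + α) * μ + (1 + α) * α * X)) / M by ring,
    show -(α ^ 2 * X / (2 * M)) = -(α ^ 2 * X / 2) / M by ring]
  refine div_le_div_of_nonneg_right ?_ hM.le
  nlinarith [mul_le_mul_of_nonneg_left hexp hμ, mul_nonneg (mul_nonneg hα.le hα.le) hX,
    mul_nonneg (mul_nonneg (mul_nonneg hα.le hα.le) hα.le) hX]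

theorem roundingProb_lower_tail_le {y ρ : ι → ℝ} {M α X : ℝ} (hM : 0 < M)
    (hy : ∀ j, 0 ≤ y j ∧ y j ≤ 1) (hρ : ∀ j, 0 ≤ ρ j ∧ ρ j ≤ M)
    (hα : 0 < α) (hα₁ : α ≤ 1) (hX : 0 ≤ X) :
    roundingProb y (fun z => roundedSum ρ z < (1 - α) * (∑ j, ρ j * y j) - (1 - α) * α * X) ≤
      exp (-(α ^ 2 * X / (2 * M))) := by
  set μ := ∑ j, ρ j * y j
  by_cases hμX : α * X ≤ μ
  swap
  · -- the threshold is negative, so the event is empty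
    refine le_of_eq_of_le (sum_eq_zero fun z _ => if_neg (not_lt.2 ?_)) (exp_pos _).le
    nlinarith [roundedSum_nonneg (fun j => (hρ j).1) z]
  refine (roundingProb_le_exp (t := -(α / M)) (a := (1 - α) * μ - (1 - α) * α * X) hM hy hρ fun z hz => by
    nlinarith [mul_le_mul_of_nonneg_left hz.le (div_nonneg hα.le hM.le)]).trans
    (exp_le_exp.2 ?_)
  have hexp : exp (-α) * (1 + α) ≤ 1 := by
    calc exp (-α) * (1 + α) ≤ exp (-α) * exp α :=
          mul_le_mul_of_nonneg_left (by linarith [add_one_le_exp α]) (exp_pos _).le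
      _ = 1 := by rw [← exp_add, neg_add_cancel, exp_zero]
  have hcoef : α * (1 - α) + exp (-α) - 1 ≤ 0 := by nlinarith [pow_pos hα 3]
  have hhalf : exp (-α) - 1 ≤ -(α / 2) := by nlinarith
  rw [neg_mul, div_mul_cancel₀ α hM.ne',
    show μ / M * (exp (-α) - 1) - -(α / M) * ((1 - α) * μ - (1 - α) * α * X) =
      ((μ - α * X) * (α * (1 - α) + exp (-α) - 1) + α * X * (exp (-α) - 1)) / M by ring,
    show -(α ^ 2 * X / (2 * M)) = (α * X * -(α / 2)) / M by ring]
  refine div_le_div_of_nonneg_right ?_ hM.le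
  nlinarith [mul_nonpos_of_nonneg_of_nonpos (sub_nonneg.2 hμX) hcoef,
    mul_le_mul_of_nonneg_left hhalf (mul_nonneg hα.le hX)]

theorem one_sub_roundingProb_tails_le {y : ι → ℝ} (hy : ∀ j, 0 ≤ y j ∧ y j ≤ 1)
    (f : (ι → Bool) → ℝ) (L U : ℝ) :
    1 - roundingProb y (fun z => f z < L) - roundingProb y (fun z => U < f z) ≤
      roundingProb y (fun z => L ≤ f z ∧ f z ≤ U) := by
  rw [← sum_roundingWeight y, roundingProb, roundingProb, roundingProb, ← sum_sub_distrib,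
    ← sum_sub_distrib]
  refine sum_le_sum fun z _ => ?_
  have hw := roundingWeight_nonneg hy z
  by_cases hL : f z < L
  · simp only [hL, ↓reduceIte, sub_self, zero_sub, not_le.2 hL, false_and, Left.neg_nonpos_iff]
    split_ifs <;> linarith
  by_cases hU : U < f z
  · simp [hL, hU, not_le.2 hU]
  simp [hL, hU, not_lt.1 hL, not_lt.1 hU]

end RandomizedRounding

theorem exp_neg_le_one_div_pow {x c : ℝ} (hx : 0 < x) (m : ℕ) (h : m * log x ≤ c) :
    exp (-c) ≤ 1 / x ^ m := by
  calc exp (-c) ≤ exp (-(m * log x)) := exp_le_exp.2 (neg_le_neg h)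
    _ = 1 / x ^ m := by rw [exp_neg, exp_nat_mul, exp_log hx, one_div]

open Classical in
theorem rounding_lemma_general (n k q : ℕ) (δ β α : ℝ)
    (hn : 2 ≤ n) (hβ : 1 ≤ β) (hα : 0 < α) (hα' : α < 1)
    (hcond : 3 * ((k : ℝ) + 1) * ((q : ℝ) + 1) * β / α ^ 3 ≤ (n : ℝ) ^ δ / Real.log n)
    (y : Fin n → ℝ) (hy : ∀ j, 0 ≤ y j ∧ y j ≤ 1)
    (ρc : Fin n → ℝ) (hρc : ∀ j, 0 ≤ ρc j ∧ ρc j ≤ ((q : ℝ) + 1) * β * (n : ℝ) ^ q) :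
    (1 : ℝ) - 2 / (n : ℝ) ^ (k + 1) ≤
      ∑ z : Fin n → Bool,
        (if (1 - α) * (∑ j, ρc j * y j) - (1 - α) * α * (n : ℝ) ^ ((q : ℝ) + δ) ≤
              (∑ j, ρc j * (if z j then (1 : ℝ) else 0)) ∧
            (∑ j, ρc j * (if z j then (1 : ℝ) else 0)) ≤
              (1 + α) * (∑ j, ρc j * y j) + (1 + α) * α * (n : ℝ) ^ ((q : ℝ) + δ)
          then ∏ j, (if z j then y j else 1 - y j) else 0) := by
  have hn₁ : (1 : ℝ) < n := by exact_mod_cast hn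
  have hn₀ : (0 : ℝ) < n := by linarith
  have hM : 0 < ((q : ℝ) + 1) * β * (n : ℝ) ^ q := by positivity
  have hnδ : 0 < (n : ℝ) ^ δ := rpow_pos_of_pos hn₀ δ
  have hX : (n : ℝ) ^ ((q : ℝ) + δ) = (n : ℝ) ^ q * (n : ℝ) ^ δ := by
    rw [rpow_add hn₀, rpow_natCast]
  have htail : exp (-(α ^ 2 * (n : ℝ) ^ ((q : ℝ) + δ) / (2 * (((q : ℝ) + 1) * β * (n : ℝ) ^ q))))
      ≤ 1 / (n : ℝ) ^ (k + 1) := by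
    refine exp_neg_le_one_div_pow hn₀ (k + 1) ?_
    rw [div_le_div_iff₀ (pow_pos hα 3) (log_pos hn₁)] at hcond
    rw [hX, le_div_iff₀ (by positivity)]
    have hlog : 2 * ((k : ℝ) + 1) * ((q : ℝ) + 1) * β * log n ≤ α ^ 2 * (n : ℝ) ^ δ := by
      nlinarith [mul_le_mul_of_nonneg_left hα'.le (mul_nonneg (sq_nonneg α) hnδ.le)]
    push_cast
    nlinarith [mul_le_mul_of_nonneg_left hlog (pow_pos hn₀ q).le]
  have hX₀ : 0 ≤ (n : ℝ) ^ ((q : ℝ) + δ) := (rpow_pos_of_pos hn₀ _).le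
  have hlower := roundingProb_lower_tail_le hM hy hρc hα hα'.le hX₀
  have hupper := roundingProb_upper_tail_le hM hy hρc hα hα'.le hX₀
  have hboth := one_sub_roundingProb_tails_le hy (roundedSum ρc)
    ((1 - α) * (∑ j, ρc j * y j) - (1 - α) * α * (n : ℝ) ^ ((q : ℝ) + δ))
    ((1 + α) * (∑ j, ρc j * y j) + (1 + α) * α * (n : ℝ) ^ ((q : ℝ) + δ))
  refine le_trans ?_ hboth
  linarith [show 2 / (n : ℝ) ^ (k + 1) = 1 / (n : ℝ) ^ (k + 1) + 1 / (n : ℝ) ^ (k + 1) by ring]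

open Classical in
/-- One-sided rounding lemma (nonnegative coefficients): if z is obtained from
    y ∈ [0,1]^n by independent randomized rounding, then
    (1−α)ρ̂ − (1−α)α n^{q+δ} ≤ ρ ≤ (1+α)ρ̂ + (1+α)α n^{q+δ}
    holds with probability at least 1 − 2/n^{k+1}, where
    ρ = Σ_j ρ_j z_j and ρ̂ = Σ_j ρ_j y_j. -/
theorem rounding_lemma (n k q : ℕ) (δ β α : ℝ)
    (hn : 2 ≤ n) (hδ : 0 < δ) (hk : 1 ≤ k) (hβ : 1 ≤ β) (hα : 0 < α) (hα' : α < 1)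
    (hcond : 3 * ((k : ℝ) + 1) * ((q : ℝ) + 1) * β / α ^ 3 ≤ (n : ℝ) ^ δ / Real.log n)
    (y : Fin n → ℝ) (hy : ∀ j, 0 ≤ y j ∧ y j ≤ 1)
    (ρc : Fin n → ℝ) (hρc : ∀ j, 0 ≤ ρc j ∧ ρc j ≤ ((q : ℝ) + 1) * β * (n : ℝ) ^ q) :
    (1 : ℝ) - 2 / (n : ℝ) ^ (k + 1) ≤
      ∑ z : Fin n → Bool,
        (if (1 - α) * (∑ j, ρc j * y j) - (1 - α) * α * (n : ℝ) ^ ((q : ℝ) + δ) ≤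
              (∑ j, ρc j * (if z j then (1 : ℝ) else 0)) ∧
            (∑ j, ρc j * (if z j then (1 : ℝ) else 0)) ≤
              (1 + α) * (∑ j, ρc j * y j) + (1 + α) * α * (n : ℝ) ^ ((q : ℝ) + δ)
          then ∏ j, (if z j then y j else 1 - y j) else 0) :=
  rounding_lemma_general n k q δ β α hn hβ hα hα' hcond y hy ρc hρc
end

section
/- Let n ≥ 1 and d ≥ 2 be integers, β ≥ 1 and δ ∈ (0,1]. For each ℓ ∈ {0,…,d−1} let c_ℓ : {1,…,n}^{d−ℓ} → ℝ satisfy Σ_{t ∈ {1,…,n}^{d−ℓ}} |c_ℓ(t)| ≤ β·n^{d−1+δ}. Let ρ_ℓ : {1,…,n}^{d−ℓ} → ℝ (for 1 ≤ ℓ ≤ d−2) and ρ̄_ℓ : {1,…,n}^{d−ℓ} → ℝ (for 1 ≤ ℓ ≤ d−1) satisfy: ρ̄_1(t) = Σ_{j=1}^n |c_0(t,j)| for all t ∈ {1,…,n}^{d−1}; for 1 ≤ ℓ ≤ d−2, |ρ_ℓ(s)| ≤ |c_ℓ(s)| + ρ̄_ℓ(s) for all s ∈ {1,…,n}^{d−ℓ},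 and ρ̄_{ℓ+1}(t) = Σ_{j=1}^n |ρ_ℓ(t,j)| for all t ∈ {1,…,n}^{d−ℓ−1}. Then for every ℓ ∈ {1,…,d−1}: Σ_{t ∈ {1,…,n}^{d−ℓ}} ρ̄_ℓ(t) ≤ ℓ·β·n^{d−1+δ}. -/
/-! Summing the recursion `ρ̄_{ℓ+1}(t) = Σ_j |ρ_ℓ(t, j)|` over all tuples `t` turns it into
`Σ ρ̄_{ℓ+1} = Σ |ρ_ℓ| ≤ Σ |c_ℓ| + Σ ρ̄_ℓ ≤ β n^{d-1+δ} + Σ ρ̄_ℓ`, and at the first level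
`Σ ρ̄_1 = Σ |c_0|`, so every level adds at most `β n^{d-1+δ}`. Level `ℓ` lives on tuples of
length `d - ℓ`, so the induction on `ℓ` runs downwards in the tuple length. -/

open Finset

theorem Fin.sum_sum_snoc {M α : Type*} [AddCommMonoid M] [Fintype α] {k : ℕ}
    (f : (Fin (k + 1) → α) → M) :
    ∑ t : Fin k → α, ∑ j, f (Fin.snoc t j) = ∑ s, f s := by
  rw [Finset.sum_comm, ← Fintype.sum_prod_type']
  exact Fintype.sum_equiv (Fin.snocEquiv fun _ => α) _ _ fun _ => rfl

theorem sum_eq_sum_abs_of_eq_sum_abs_snoc {α : Type*} [Fintype α] {k : ℕ}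
    {ρbar : (Fin k → α) → ℝ} {ρ : (Fin (k + 1) → α) → ℝ}
    (h : ∀ t, ρbar t = ∑ j, |ρ (Fin.snoc t j)|) :
    ∑ t, ρbar t = ∑ s, |ρ s| := by
  simp_rw [h]
  exact Fin.sum_sum_snoc fun s => |ρ s|

theorem le_nat_mul_of_le_add_succ {S : ℕ → ℝ} {B : ℝ} {d : ℕ} (htop : S (d - 1) ≤ B)
    (hstep : ∀ k, 1 ≤ k → k ≤ d - 2 → S k ≤ B + S (k + 1)) :
    ∀ ℓ, 1 ≤ ℓ → ℓ ≤ d - 1 → S (d - ℓ) ≤ ℓ * B := by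
  intro ℓ hℓ
  induction ℓ, hℓ using Nat.le_induction with
  | base => exact fun _ => by simpa using htop
  | succ ℓ hℓ ih =>
    intro hℓd
    have hk : d - (ℓ + 1) + 1 = d - ℓ := by omega
    calc S (d - (ℓ + 1)) ≤ B + S (d - ℓ) := hk ▸ hstep _ (by omega) (by omega)
      _ ≤ B + ℓ * B := by gcongr; exact ih (by omega)
      _ = (ℓ + 1 : ℕ) * B := by push_cast; ring

theorem abs_value_estimations_bound_general (n d : ℕ)
    (β δ : ℝ)
    (c : (k : ℕ) → (Fin k → Fin n) → ℝ)
    (hc : ∀ k, 1 ≤ k → k ≤ d →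
      ∑ t : Fin k → Fin n, |c k t| ≤ β * (n : ℝ) ^ ((d : ℝ) - 1 + δ))
    (ρ ρbar : (k : ℕ) → (Fin k → Fin n) → ℝ)
    (hbase : ∀ t : Fin (d - 1) → Fin n,
      ρbar (d - 1) t = ∑ j, |c (d - 1 + 1) (Fin.snoc t j)|)
    (hρ : ∀ k, 1 ≤ k → k ≤ d - 2 → ∀ s : Fin (k + 1) → Fin n,
      |ρ (k + 1) s| ≤ |c (k + 1) s| + ρbar (k + 1) s)
    (hrec : ∀ k, 1 ≤ k → k ≤ d - 2 → ∀ t : Fin k → Fin n,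
      ρbar k t = ∑ j, |ρ (k + 1) (Fin.snoc t j)|) :
    ∀ ℓ, 1 ≤ ℓ → ℓ ≤ d - 1 →
      ∑ t : Fin (d - ℓ) → Fin n, ρbar (d - ℓ) t ≤
        (ℓ : ℝ) * β * (n : ℝ) ^ ((d : ℝ) - 1 + δ) := by
  set B := β * (n : ℝ) ^ ((d : ℝ) - 1 + δ)
  intro ℓ hℓ hℓd
  rw [mul_assoc]
  refine le_nat_mul_of_le_add_succ (S := fun k => ∑ t, ρbar k t) ?_ ?_ ℓ hℓ hℓd
  · rw [sum_eq_sum_abs_of_eq_sum_abs_snoc hbase]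
    exact hc _ (by omega) (by omega)
  · intro k hk hkd
    calc ∑ t, ρbar k t = ∑ s, |ρ (k + 1) s| := sum_eq_sum_abs_of_eq_sum_abs_snoc (hrec k hk hkd)
      _ ≤ ∑ s, (|c (k + 1) s| + ρbar (k + 1) s) := sum_le_sum fun s _ => hρ k hk hkd s
      _ ≤ B + ∑ s, ρbar (k + 1) s := by
        rw [sum_add_distrib]
        gcongr
        exact hc _ (by omega) (by omega)

/-- Bound on the sums of absolute value estimations for (the decomposition of)
    a β-smooth δ-bounded degree-d polynomial: at each level ℓ ∈ {1,…,d−1}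
    (tuples of length k = d−ℓ) the sum of the absolute value estimations is at
    most ℓ·β·n^{d−1+δ}. -/
theorem abs_value_estimations_bound (n d : ℕ) (hn : 1 ≤ n) (hd : 2 ≤ d)
    (β δ : ℝ) (hβ : 1 ≤ β) (hδ : 0 < δ) (hδ1 : δ ≤ 1)
    (c : (k : ℕ) → (Fin k → Fin n) → ℝ)
    (hc : ∀ k, 1 ≤ k → k ≤ d →
      ∑ t : Fin k → Fin n, |c k t| ≤ β * (n : ℝ) ^ ((d : ℝ) - 1 + δ))
    (ρ ρbar : (k : ℕ) → (Fin k → Fin n) → ℝ)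
    (hbase : ∀ t : Fin (d - 1) → Fin n,
      ρbar (d - 1) t = ∑ j, |c (d - 1 + 1) (Fin.snoc t j)|)
    (hρ : ∀ k, 1 ≤ k → k ≤ d - 2 → ∀ s : Fin (k + 1) → Fin n,
      |ρ (k + 1) s| ≤ |c (k + 1) s| + ρbar (k + 1) s)
    (hrec : ∀ k, 1 ≤ k → k ≤ d - 2 → ∀ t : Fin k → Fin n,
      ρbar k t = ∑ j, |ρ (k + 1) (Fin.snoc t j)|) :
    ∀ ℓ, 1 ≤ ℓ → ℓ ≤ d - 1 →
      ∑ t : Fin (d - ℓ) → Fin n, ρbar (d - ℓ) t ≤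
        (ℓ : ℝ) * β * (n : ℝ) ^ ((d : ℝ) - 1 + δ) :=
  abs_value_estimations_bound_general n d β δ c hc ρ ρbar hbase hρ hrec
end

section
/- Let n ≥ 1 and d ≥ 2 be integers, β ≥ 1 and δ ∈ (0,1]. For each ℓ ∈ {0,…,d−1} let c_ℓ : {1,…,n}^{d−ℓ} → ℝ satisfy Σ_{t ∈ {1,…,n}^{d−ℓ}} |c_ℓ(t)| ≤ β·n^{d−1+δ}. Let ρ_ℓ, ρ̄_ℓ be as follows: ρ̄_1(t) = Σ_{j=1}^n |c_0(t,j)|; for 1 ≤ ℓ ≤ d−2, |ρ_ℓ(s)| ≤ |c_ℓ(s)| + ρ̄_ℓ(s) for all s ∈ {1,…,n}^{d−ℓ}, and ρ̄_{ℓ+1}(t) = Σ_{j=1}^n |ρ_ℓ(t,j)|. Define the cumulative absolute value estimations by t̄_1 = ρ̄_1 and, for 2 ≤ ℓ ≤ d−1, t̄_ℓ(t) = ρ̄_ℓ(t) + Σ_{j=1}^n t̄_{ℓ−1}(t,j). Then for every ℓ ∈ {1,…,d−1}: Σ_{t ∈ {1,…,n}^{d−ℓ}} t̄_ℓ(t)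 ≤ (ℓ+1)·ℓ·β·n^{d−1+δ}/2; in particular, Σ_{j=1}^n t̄_{d−1}(j) ≤ d(d−1)·β·n^{d−1+δ}/2. -/
/-!
Summing the defining recursions over all tuples of a level turns them into recursions between
level sums: the level sums of `ρ̄` grow by at most one coefficient budget `β n^{d-1+δ}` per
level, so at depth `ℓ` they are at most `ℓ β n^{d-1+δ}`, and the level sums of `t̄` are partial
sums of those, hence at most `(1 + ⋯ + ℓ) β n^{d-1+δ} = (ℓ+1) ℓ β n^{d-1+δ} / 2`.
-/

open Finset

section LevelSum

variable {α : Type*} [Fintype α]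

def levelSum (f : (k : ℕ) → (Fin k → α) → ℝ) (k : ℕ) : ℝ :=
  ∑ t : Fin k → α, f k t

theorem levelSum_succ (f : (k : ℕ) → (Fin k → α) → ℝ) (k : ℕ) :
    levelSum f (k + 1) = ∑ t : Fin k → α, ∑ j, f (k + 1) (Fin.snoc t j) := by
  rw [levelSum, ← (Fin.snocEquiv fun _ => α).sum_comp, Fintype.sum_prod_type, sum_comm]
  rfl

theorem levelSum_eq_levelSum_succ {f g : (k : ℕ) → (Fin k → α) → ℝ} {k : ℕ}
    (h : ∀ t : Fin k → α, f k t = ∑ j, g (k + 1) (Fin.snoc t j)) :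
    levelSum f k = levelSum g (k + 1) := by
  rw [levelSum_succ]
  exact sum_congr rfl fun t _ => h t

theorem levelSum_eq_add_levelSum_succ {f g h : (k : ℕ) → (Fin k → α) → ℝ} {k : ℕ}
    (hf : ∀ t : Fin k → α, f k t = g k t + ∑ j, h (k + 1) (Fin.snoc t j)) :
    levelSum f k = levelSum g k + levelSum h (k + 1) := by
  rw [levelSum_succ]
  unfold levelSum
  rw [← sum_add_distrib]
  exact sum_congr rfl fun t _ => hf t

theorem levelSum_le_levelSum_add_levelSum {f g c r : (k : ℕ) → (Fin k → α) → ℝ} {k : ℕ}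
    (hf : ∀ t : Fin k → α, f k t = ∑ j, |g (k + 1) (Fin.snoc t j)|)
    (hg : ∀ s : Fin (k + 1) → α, |g (k + 1) s| ≤ |c (k + 1) s| + r (k + 1) s) :
    levelSum f k ≤ levelSum (fun k s => |c k s|) (k + 1) + levelSum r (k + 1) := by
  rw [levelSum_eq_levelSum_succ (g := fun k s => |g k s|) hf]
  unfold levelSum
  rw [← sum_add_distrib]
  exact sum_le_sum fun s _ => hg s

theorem levelSum_fin_one (f : (k : ℕ) → (Fin k → α) → ℝ) :
    levelSum f 1 = ∑ j : α, f 1 (fun _ => j) :=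
  ((Equiv.funUnique (Fin 1) α).symm.sum_comp _).symm

end LevelSum

theorem le_sum_range_of_le_add {a v : ℕ → ℝ} {m : ℕ} (h₁ : v 1 ≤ a 1)
    (hstep : ∀ ℓ, 1 ≤ ℓ → ℓ < m → v (ℓ + 1) ≤ a (ℓ + 1) + v ℓ) {ℓ : ℕ} (hℓ : 1 ≤ ℓ)
    (hℓm : ℓ ≤ m) : v ℓ ≤ ∑ i ∈ range ℓ, a (i + 1) := by
  induction ℓ, hℓ using Nat.le_induction with
  | base => simpa using h₁
  | succ ℓ hℓ ih =>
    rw [sum_range_succ]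
    linarith [hstep ℓ hℓ hℓm, ih (by omega)]

theorem sum_range_natCast_succ_mul (ℓ : ℕ) (B : ℝ) :
    ∑ i ∈ range ℓ, ((i + 1 : ℕ) : ℝ) * B = ((ℓ : ℝ) + 1) * ℓ * B / 2 := by
  induction ℓ with
  | zero => simp
  | succ ℓ ih => rw [sum_range_succ, ih]; push_cast; ring

theorem cumulative_abs_value_estimations_bound_general (n d : ℕ) (hd : 2 ≤ d)
    (β δ : ℝ)
    (c : (k : ℕ) → (Fin k → Fin n) → ℝ)
    (hc : ∀ k, 1 ≤ k → k ≤ d →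
      ∑ t : Fin k → Fin n, |c k t| ≤ β * (n : ℝ) ^ ((d : ℝ) - 1 + δ))
    (ρ ρbar tbar : (k : ℕ) → (Fin k → Fin n) → ℝ)
    (hbase : ∀ t : Fin (d - 1) → Fin n,
      ρbar (d - 1) t = ∑ j, |c (d - 1 + 1) (Fin.snoc t j)|)
    (hρ : ∀ k, 1 ≤ k → k ≤ d - 2 → ∀ s : Fin (k + 1) → Fin n,
      |ρ (k + 1) s| ≤ |c (k + 1) s| + ρbar (k + 1) s)
    (hrec : ∀ k, 1 ≤ k → k ≤ d - 2 → ∀ t : Fin k → Fin n,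
      ρbar k t = ∑ j, |ρ (k + 1) (Fin.snoc t j)|)
    (htbase : ∀ t : Fin (d - 1) → Fin n, tbar (d - 1) t = ρbar (d - 1) t)
    (htrec : ∀ k, 1 ≤ k → k ≤ d - 2 → ∀ t : Fin k → Fin n,
      tbar k t = ρbar k t + ∑ j, tbar (k + 1) (Fin.snoc t j)) :
    (∀ ℓ, 1 ≤ ℓ → ℓ ≤ d - 1 →
      ∑ t : Fin (d - ℓ) → Fin n, tbar (d - ℓ) t ≤
        ((ℓ : ℝ) + 1) * (ℓ : ℝ) * β * (n : ℝ) ^ ((d : ℝ) - 1 + δ) / 2) ∧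
    ∑ j : Fin n, tbar 1 (fun _ => j) ≤
      (d : ℝ) * ((d : ℝ) - 1) * β * (n : ℝ) ^ ((d : ℝ) - 1 + δ) / 2 := by
  set B := β * (n : ℝ) ^ ((d : ℝ) - 1 + δ)
  have hρbar : ∀ ℓ, 1 ≤ ℓ → ℓ ≤ d - 1 → levelSum ρbar (d - ℓ) ≤ ℓ * B := by
    intro ℓ hℓ hℓd
    refine (le_sum_range_of_le_add (a := fun _ => B) (v := fun ℓ => levelSum ρbar (d - ℓ))
      (m := d - 1) ?_ ?_ hℓ hℓd).trans_eq (by simp)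
    · rw [levelSum_eq_levelSum_succ (g := fun k s => |c k s|) hbase]
      exact hc _ (by omega) (by omega)
    · intro i hi hid
      have := levelSum_le_levelSum_add_levelSum (k := d - (i + 1))
        (hrec _ (by omega) (by omega)) (hρ _ (by omega) (by omega))
      rw [show d - (i + 1) + 1 = d - i by omega] at this
      have hci : levelSum (fun k s => |c k s|) (d - i) ≤ B := hc _ (by omega) (by omega)
      linarith
  have htbar : ∀ ℓ, 1 ≤ ℓ → ℓ ≤ d - 1 → levelSum tbar (d - ℓ) ≤ ((ℓ : ℝ) + 1) * ℓ * B / 2 := by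
    intro ℓ hℓ hℓd
    rw [← sum_range_natCast_succ_mul]
    refine le_sum_range_of_le_add (a := fun ℓ => ((ℓ : ℕ) : ℝ) * B)
      (v := fun ℓ => levelSum tbar (d - ℓ)) (m := d - 1) ?_ ?_ hℓ hℓd
    · simpa [levelSum, htbase] using hρbar 1 le_rfl (by omega)
    · intro i hi hid
      have := levelSum_eq_add_levelSum_succ (htrec (d - (i + 1)) (by omega) (by omega))
      rw [show d - (i + 1) + 1 = d - i by omega] at this
      linarith [hρbar (i + 1) (by omega) hid]
  refine ⟨fun ℓ hℓ hℓd => (htbar ℓ hℓ hℓd).trans_eq (by ring), ?_⟩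
  have htop := htbar (d - 1) (by omega) le_rfl
  rw [show d - (d - 1) = 1 by omega, levelSum_fin_one, Nat.cast_sub (by omega)] at htop
  exact htop.trans_eq (by push_cast; ring)

/-- Bound on the sums of cumulative absolute value estimations for (the
    decomposition of) a β-smooth δ-bounded degree-d polynomial: at each level
    ℓ ∈ {1,…,d−1} (tuples of length k = d−ℓ) the sum of the cumulative
    absolute value estimations is at most (ℓ+1)·ℓ·β·n^{d−1+δ}/2; in
    particular, at the top level Σ_j t̄_{d−1}(j) ≤ d(d−1)·β·n^{d−1+δ}/2. -/
theorem cumulative_abs_value_estimations_bound (n d : ℕ) (hn : 1 ≤ n) (hd : 2 ≤ d)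
    (β δ : ℝ) (hβ : 1 ≤ β) (hδ : 0 < δ) (hδ1 : δ ≤ 1)
    (c : (k : ℕ) → (Fin k → Fin n) → ℝ)
    (hc : ∀ k, 1 ≤ k → k ≤ d →
      ∑ t : Fin k → Fin n, |c k t| ≤ β * (n : ℝ) ^ ((d : ℝ) - 1 + δ))
    (ρ ρbar tbar : (k : ℕ) → (Fin k → Fin n) → ℝ)
    (hbase : ∀ t : Fin (d - 1) → Fin n,
      ρbar (d - 1) t = ∑ j, |c (d - 1 + 1) (Fin.snoc t j)|)
    (hρ : ∀ k, 1 ≤ k → k ≤ d - 2 → ∀ s : Fin (k + 1) → Fin n,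
      |ρ (k + 1) s| ≤ |c (k + 1) s| + ρbar (k + 1) s)
    (hrec : ∀ k, 1 ≤ k → k ≤ d - 2 → ∀ t : Fin k → Fin n,
      ρbar k t = ∑ j, |ρ (k + 1) (Fin.snoc t j)|)
    (htbase : ∀ t : Fin (d - 1) → Fin n, tbar (d - 1) t = ρbar (d - 1) t)
    (htrec : ∀ k, 1 ≤ k → k ≤ d - 2 → ∀ t : Fin k → Fin n,
      tbar k t = ρbar k t + ∑ j, tbar (k + 1) (Fin.snoc t j)) :
    (∀ ℓ, 1 ≤ ℓ → ℓ ≤ d - 1 →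
      ∑ t : Fin (d - ℓ) → Fin n, tbar (d - ℓ) t ≤
        ((ℓ : ℝ) + 1) * (ℓ : ℝ) * β * (n : ℝ) ^ ((d : ℝ) - 1 + δ) / 2) ∧
    ∑ j : Fin n, tbar 1 (fun _ => j) ≤
      (d : ℝ) * ((d : ℝ) - 1) * β * (n : ℝ) ^ ((d : ℝ) - 1 + δ) / 2 :=
  cumulative_abs_value_estimations_bound_general n d hd β δ c hc ρ ρbar tbar hbase hρ hrec htbase
    htrec
end

section
/- Let G be a graph with vertex set {1,…,n}, let δ ∈ (0,1], ε1 ∈ (0,1) and ε2 > 0, and assume 4 ≤ ε2·n^{1+δ/3}. Let ρ_1,…,ρ_n be nonnegative reals, let y ∈ [0,1]^n, and suppose z ∈ {0,1}^n satisfies, for every vertex j, (1−ε1)²·ρ_j − 2·ε2·n^{δ/3} ≤ Σ_{i∈N(j)} z_i ≤ (1+ε1)²·ρ_j + 2·ε2·n^{δ/3}, and |Σ_{j=1}^n z_j·ρ_j − Σ_{j=1}^n y_j·ρ_j| ≤ 1. Define p(z) = Σ_{j=1}^n z_j·Σ_{i∈N(j)} z_i. Then (1−ε1)²·Σ_{j=1}^n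 y_j·ρ_j − 3·ε2·n^{1+δ/3} ≤ p(z) ≤ (1+ε1)²·Σ_{j=1}^n y_j·ρ_j + 3·ε2·n^{1+δ/3}. -/
/-!
Summing the degree constraints against the 0/1 weights `z` gives
`(1 ∓ ε1)² · Σ z_j ρ_j ∓ 2ε2 n^{δ/3} · Σ z_j` as bounds for `p(z)`, and `Σ z_j ≤ n` turns the
additive error into `2ε2 n^{1+δ/3}`. Replacing `Σ z_j ρ_j` by `Σ y_j ρ_j` costs at most
`(1 ± ε1)² ≤ 4 ≤ ε2 n^{1+δ/3}`.
-/

open Finset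

section WeightedSums

variable {ι : Type*} [Fintype ι] {w ρ d : ι → ℝ} {a b c : ℝ}

theorem sum_mul_le_of_le_mul_add (hw0 : ∀ j, 0 ≤ w j) (hw1 : ∀ j, w j ≤ 1) (hc : 0 ≤ c)
    (hd : ∀ j, d j ≤ b * ρ j + c) :
    ∑ j, w j * d j ≤ b * ∑ j, w j * ρ j + c * Fintype.card ι := calc
  ∑ j, w j * d j ≤ ∑ j, w j * (b * ρ j + c) :=
    sum_le_sum fun j _ => mul_le_mul_of_nonneg_left (hd j) (hw0 j)
  _ = b * ∑ j, w j * ρ j + c * ∑ j, w j := by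
    simp only [mul_sum, ← sum_add_distrib]
    exact sum_congr rfl fun j _ => by ring
  _ ≤ b * ∑ j, w j * ρ j + c * Fintype.card ι := by
    gcongr
    simpa using sum_le_sum fun j (_ : j ∈ univ) => hw1 j

theorem mul_sub_le_sum_mul_of_mul_sub_le (hw0 : ∀ j, 0 ≤ w j) (hw1 : ∀ j, w j ≤ 1)
    (hc : 0 ≤ c) (hd : ∀ j, a * ρ j - c ≤ d j) :
    a * ∑ j, w j * ρ j - c * Fintype.card ι ≤ ∑ j, w j * d j := by
  have h := sum_mul_le_of_le_mul_add (ρ := ρ) (d := fun j => -d j) (b := -a) hw0 hw1 hc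
    fun j => by linarith [hd j]
  simp only [mul_neg, sum_neg_distrib, neg_mul] at h
  linarith

end WeightedSums

theorem mul_le_mul_add_of_abs_sub_le_one {a M S T : ℝ} (ha : 0 ≤ a) (haM : a ≤ M)
    (h : |T - S| ≤ 1) : a * T ≤ a * S + M := by
  nlinarith [le_abs_self (T - S)]

open Classical in
theorem densest_rounded_value_general (n : ℕ) (G : SimpleGraph (Fin n)) (δ ε1 ε2 : ℝ)
    (hδ : 0 < δ) (hε1 : 0 < ε1) (hε1' : ε1 < 1) (hε2 : 0 < ε2)
    (hn : 4 ≤ ε2 * (n : ℝ) ^ (1 + δ / 3))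
    (ρ : Fin n → ℝ)
    (y : Fin n → ℝ)
    (z : Fin n → ℝ) (hz01 : ∀ j, z j = 0 ∨ z j = 1)
    (hzcon : ∀ j,
      (1 - ε1) ^ 2 * ρ j - 2 * ε2 * (n : ℝ) ^ (δ / 3) ≤
        ∑ i ∈ G.neighborFinset j, z i ∧
      ∑ i ∈ G.neighborFinset j, z i ≤
        (1 + ε1) ^ 2 * ρ j + 2 * ε2 * (n : ℝ) ^ (δ / 3))
    (hclose : |(∑ j, z j * ρ j) - ∑ j, y j * ρ j| ≤ 1) :
    (1 - ε1) ^ 2 * (∑ j, y j * ρ j) - 3 * ε2 * (n : ℝ) ^ (1 + δ / 3) ≤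
        ∑ j, z j * ∑ i ∈ G.neighborFinset j, z i ∧
      ∑ j, z j * ∑ i ∈ G.neighborFinset j, z i ≤
        (1 + ε1) ^ 2 * (∑ j, y j * ρ j) + 3 * ε2 * (n : ℝ) ^ (1 + δ / 3) := by
  have hz0 : ∀ j, 0 ≤ z j := fun j => by rcases hz01 j with h | h <;> simp [h]
  have hz1 : ∀ j, z j ≤ 1 := fun j => by rcases hz01 j with h | h <;> simp [h]
  have hc : 0 ≤ 2 * ε2 * (n : ℝ) ^ (δ / 3) := by positivity
  have hcn : 2 * ε2 * (n : ℝ) ^ (δ / 3) * n = 2 * (ε2 * (n : ℝ) ^ (1 + δ / 3)) := by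
    rw [Real.rpow_one_add' n.cast_nonneg (by positivity)]
    ring
  have hlow := mul_sub_le_sum_mul_of_mul_sub_le hz0 hz1 hc fun j => (hzcon j).1
  have hupp := sum_mul_le_of_le_mul_add hz0 hz1 hc fun j => (hzcon j).2
  rw [Fintype.card_fin, hcn] at hlow hupp
  have hshift_low := mul_le_mul_add_of_abs_sub_le_one (sq_nonneg (1 - ε1))
    (by nlinarith : (1 - ε1) ^ 2 ≤ ε2 * (n : ℝ) ^ (1 + δ / 3)) ((abs_sub_comm _ _).trans_le hclose)
  have hshift_upp := mul_le_mul_add_of_abs_sub_le_one (sq_nonneg (1 + ε1))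
    (by nlinarith : (1 + ε1) ^ 2 ≤ ε2 * (n : ℝ) ^ (1 + δ / 3)) hclose
  constructor <;> linarith

open Classical in
/-- Densest-k-subgraph rounding: the value p(z) of the rounded solution z is
    within multiplicative (1±ε1)² and additive 3ε2·n^{1+δ/3} of the LP
    objective value of the fractional solution y. -/
theorem densest_rounded_value (n : ℕ) (G : SimpleGraph (Fin n)) (δ ε1 ε2 : ℝ)
    (hδ : 0 < δ) (hδ1 : δ ≤ 1) (hε1 : 0 < ε1) (hε1' : ε1 < 1) (hε2 : 0 < ε2)
    (hn : 4 ≤ ε2 * (n : ℝ) ^ (1 + δ / 3))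
    (ρ : Fin n → ℝ) (hρ : ∀ j, 0 ≤ ρ j)
    (y : Fin n → ℝ) (hy : ∀ j, 0 ≤ y j ∧ y j ≤ 1)
    (z : Fin n → ℝ) (hz01 : ∀ j, z j = 0 ∨ z j = 1)
    (hzcon : ∀ j,
      (1 - ε1) ^ 2 * ρ j - 2 * ε2 * (n : ℝ) ^ (δ / 3) ≤
        ∑ i ∈ G.neighborFinset j, z i ∧
      ∑ i ∈ G.neighborFinset j, z i ≤
        (1 + ε1) ^ 2 * ρ j + 2 * ε2 * (n : ℝ) ^ (δ / 3))
    (hclose : |(∑ j, z j * ρ j) - ∑ j, y j * ρ j| ≤ 1) :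
    (1 - ε1) ^ 2 * (∑ j, y j * ρ j) - 3 * ε2 * (n : ℝ) ^ (1 + δ / 3) ≤
        ∑ j, z j * ∑ i ∈ G.neighborFinset j, z i ∧
      ∑ j, z j * ∑ i ∈ G.neighborFinset j, z i ≤
        (1 + ε1) ^ 2 * (∑ j, y j * ρ j) + 3 * ε2 * (n : ℝ) ^ (1 + δ / 3) :=
  densest_rounded_value_general n G δ ε1 ε2 hδ hε1 hε1' hε2 hn ρ y z hz01 hzcon hclose
end

section
/- Let G = (V, E) be a 5-regular simple graph with |V| = n and let Δ ≥ 1 be an integer. Define the graph G' with vertex set {u_i : u ∈ V, 1 ≤ i ≤ Δ} ∪ {c^u_j : u ∈ V, 1 ≤ j ≤ 5Δ} and edge set consisting of: all pairs {u_i, v_j} with {u,v} ∈ E, 1 ≤ i ≤ Δ, 1 ≤ j ≤ Δ; and all pairs {u_i, c^u_j} with u ∈ V, 1 ≤ i ≤ Δ, 1 ≤ j ≤ 5Δ. Then the maximum cut of G' satisfies MaxCut(G') = Δ²·MaxCut(G) + 5·Δ²·n. -/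
/-!
Record a cut of the blown-up graph by how many of the `Δ` copies of each `u` and how many of
its `5Δ` consistency vertices lie on the first side. The cut size is affine in each of these
counts separately (no edge joins two vertices of the same class), so it is maximised at a corner
of the box of counts, i.e. by a cut that never splits a class. Such a cut is a weighted cut of
the quotient graph, `G` with a pendant vertex attached at every `u`, in which the edges of `G`
weigh `Δ²` and the pendant edges `5Δ²`; the pendant edges can all be cut at once by putting each
pendant vertex opposite its `u`, which leaves `Δ² · MaxCut G` for the edges of `G`.
-/

open Classical

/-- The number of edges of `H` crossing the cut `(S, Sᶜ)`: every crossing edge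
    is counted exactly once, as the ordered pair with its `S`-endpoint first. -/
noncomputable def cutSize {W : Type*} [Fintype W] (H : SimpleGraph W) (S : Finset W) : ℕ :=
  (Finset.univ.filter fun p : W × W => H.Adj p.1 p.2 ∧ p.1 ∈ S ∧ p.2 ∉ S).card

/-- The maximum, over all bipartitions of the vertex set, of the number of
    crossing edges. -/
noncomputable def maxCut {W : Type*} [Fintype W] (H : SimpleGraph W) : ℕ :=
  Finset.univ.sup fun S : Finset W => cutSize H S

open Finset Function

section MultiaffineRounding

variable {ι : Type*} [DecidableEq ι] {N : ι → ℕ} {F : (ι → ℕ) → ℤ}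

def IsMultiaffineOnBox (N : ι → ℕ) (F : (ι → ℕ) → ℤ) : Prop :=
  ∀ a i t, t ≤ N i →
    (N i : ℤ) * F (update a i t) = (N i - t) * F (update a i 0) + t * F (update a i (N i))

lemma IsMultiaffineOnBox.le_max (hF : IsMultiaffineOnBox N F) {a : ι → ℕ} {i : ι}
    (hai : a i ≤ N i) : F a ≤ max (F (update a i 0)) (F (update a i (N i))) := by
  rcases Nat.eq_zero_or_pos (a i) with h | h
  · rw [← h, update_eq_self]
    exact le_max_left _ _
  have hinterp := hF a i (a i) hai
  rw [update_eq_self] at hinterp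
  by_contra! hlt
  have hN : (a i : ℤ) ≤ N i := by exact_mod_cast hai
  have hpos : (0 : ℤ) < a i := by exact_mod_cast h
  nlinarith [max_lt_iff.mp hlt]

theorem IsMultiaffineOnBox.exists_le_indicator [Fintype ι] (hF : IsMultiaffineOnBox N F)
    {a : ι → ℕ} (ha : a ≤ N) : ∃ T : Finset ι, F a ≤ F ((T : Set ι).indicator N) := by
  suffices ∀ s : Finset ι, ∀ a ≤ N, (∀ i ∉ s, a i = 0 ∨ a i = N i) →
      ∃ T : Finset ι, F a ≤ F ((T : Set ι).indicator N) from this univ a ha (by simp)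
  intro s
  induction s using Finset.induction_on with
  | empty =>
    intro a _ hext
    refine ⟨univ.filter fun i => a i = N i, le_of_eq (congrArg F (funext fun i => ?_))⟩
    rcases hext i (notMem_empty i) with h | h <;> simp [Set.indicator_apply, h, eq_comm]
  | insert i s _ ih =>
    intro a ha hext
    have hupd : ∀ t ≤ N i, update a i t ≤ N := fun t ht j => by
      rcases eq_or_ne j i with rfl | hj
      · simpa using ht
      · simpa [hj] using ha j
    have hext' : ∀ t, (t = 0 ∨ t = N i) →
        ∀ j ∉ s, update a i t j = 0 ∨ update a i t j = N j := fun t ht j hj => by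
        rcases eq_or_ne j i with rfl | hji
        · simpa using ht
        · simpa [hji] using hext j (by simp [hji, hj])
    obtain ⟨T₀, hT₀⟩ := ih _ (hupd 0 (Nat.zero_le _)) (hext' 0 (Or.inl rfl))
    obtain ⟨T₁, hT₁⟩ := ih _ (hupd (N i) le_rfl) (hext' (N i) (Or.inr rfl))
    rcases le_max_iff.mp (hF.le_max (ha i)) with h | h
    · exact ⟨T₀, h.trans hT₀⟩
    · exact ⟨T₁, h.trans hT₁⟩

end MultiaffineRounding

section WeightedCut

variable {W : Type*} [Fintype W] (H : SimpleGraph W) (N : W → ℕ)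

noncomputable def weightedCut (T : Finset W) : ℕ :=
  ∑ p ∈ univ.filter (fun p : W × W => H.Adj p.1 p.2 ∧ p.1 ∈ T ∧ p.2 ∉ T), N p.1 * N p.2

noncomputable def maxWeightedCut : ℕ :=
  univ.sup (weightedCut H N)

/-- The cut size of a blow-up of `H` in which `a s` of the `N s` copies of `s` lie on the
first side. -/
noncomputable def fractionalCut (a : W → ℕ) : ℤ :=
  ∑ p ∈ univ.filter (fun p : W × W => H.Adj p.1 p.2), (a p.1 : ℤ) * (N p.2 - a p.2)

lemma fractionalCut_indicator (T : Finset W) :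
    fractionalCut H N ((T : Set W).indicator N) = weightedCut H N T := by
  rw [fractionalCut, weightedCut, ← filter_filter, Nat.cast_sum]
  conv_rhs => rw [sum_filter]
  refine sum_congr rfl fun p _ => ?_
  by_cases h₁ : p.1 ∈ T <;> by_cases h₂ : p.2 ∈ T <;> simp [h₁, h₂]

lemma isMultiaffineOnBox_fractionalCut [DecidableEq W] :
    IsMultiaffineOnBox N (fractionalCut H N) := by
  intro a s t _
  simp only [fractionalCut, mul_sum, ← sum_add_distrib]
  refine sum_congr rfl fun p hp => ?_
  have hne : p.1 ≠ p.2 := (mem_filter.mp hp).2.ne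
  by_cases h₁ : p.1 = s <;> by_cases h₂ : p.2 = s
  · exact absurd (h₁.trans h₂.symm) hne
  all_goals simp [h₁, h₂]; ring

lemma fractionalCut_le_maxWeightedCut {a : W → ℕ} (ha : a ≤ N) :
    fractionalCut H N a ≤ maxWeightedCut H N := by
  obtain ⟨T, hT⟩ := (isMultiaffineOnBox_fractionalCut H N).exists_le_indicator ha
  rw [fractionalCut_indicator] at hT
  exact hT.trans (by exact_mod_cast le_sup (mem_univ T))

end WeightedCut

section Comap

variable {W W' : Type*} [Fintype W'] (π : W' → W)

noncomputable def fiberCard (s : W) : ℕ := #{x | π x = s}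

lemma card_fiber_compl_add_card_fiber (S : Finset W') (s : W) :
    #{y ∈ Sᶜ | π y = s} + #{x ∈ S | π x = s} = fiberCard π s := by
  rw [fiberCard, ← card_union_of_disjoint (disjoint_filter_filter disjoint_compl_left),
    ← filter_union, ← sup_eq_union, compl_sup_eq_top, top_eq_univ]

lemma cutSize_comap [Fintype W] (H : SimpleGraph W) (S : Finset W') :
    (cutSize (H.comap π) S : ℤ) =
      fractionalCut H (fiberCard π) (fun s => #{x ∈ S | π x = s}) := by
  have hfiber : cutSize (H.comap π) S = ∑ p ∈ univ.filter (fun p : W × W => H.Adj p.1 p.2),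
      #{x ∈ S | π x = p.1} * #{y ∈ Sᶜ | π y = p.2} := by
    rw [cutSize, card_eq_sum_card_fiberwise (f := Prod.map π π)]
    · refine sum_congr rfl fun p _ => ?_
      rw [← card_product]
      congr 1
      ext ⟨x, y⟩
      simp only [mem_filter, mem_univ, true_and, mem_product, mem_compl, SimpleGraph.comap_adj,
        Prod.map, Prod.ext_iff]
      aesop
    · intro q hq
      simp only [coe_filter, mem_univ, true_and] at hq ⊢
      exact hq.1
  rw [hfiber, fractionalCut, Nat.cast_sum]
  refine sum_congr rfl fun p _ => ?_
  have := card_fiber_compl_add_card_fiber π S p.2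
  push_cast
  congr 1
  omega

lemma maxCut_comap [Fintype W] (H : SimpleGraph W) :
    maxCut (H.comap π) = maxWeightedCut H (fiberCard π) := by
  apply le_antisymm
  · refine Finset.sup_le fun S _ => ?_
    have hle : (fun s => #{x ∈ S | π x = s}) ≤ fiberCard π := fun s =>
      (card_fiber_compl_add_card_fiber π S s).symm ▸ Nat.le_add_left _ _
    exact_mod_cast (cutSize_comap π H S).trans_le (fractionalCut_le_maxWeightedCut H _ hle)
  · refine Finset.sup_le fun T _ => ?_
    have hpullback : (fun s => #{x ∈ univ.filter (π · ∈ T) | π x = s}) =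
        (T : Set W).indicator (fiberCard π) := by
      ext s
      by_cases hs : s ∈ T
      · simp only [hs, Set.indicator_of_mem, fiberCard, filter_filter, mem_coe]
        exact congrArg card (filter_congr fun x _ => and_iff_right_of_imp (· ▸ hs))
      · simpa [hs, filter_filter] using fun x (hx : π x ∈ T) (hxs : π x = s) => hs (hxs ▸ hx)
    have := cutSize_comap π H (univ.filter (π · ∈ T))
    rw [hpullback, fractionalCut_indicator] at this
    exact (Nat.cast_injective this).symm ▸ le_sup (mem_univ _)

end Comap

section Blowup

variable {V : Type*} (G : SimpleGraph V)

/-- `inl u` stands for the copies `u_i` of `u`, `inr u` for its consistency vertices `c^u_j`. -/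
def blowupBase : SimpleGraph (V ⊕ V) where
  Adj
    | .inl u, .inl v => G.Adj u v
    | .inl u, .inr v => u = v
    | .inr u, .inl v => u = v
    | .inr _, .inr _ => False
  symm := ⟨by
    rintro (u | u) (v | v) h
    exacts [h.symm, h.symm, h.symm, h]⟩
  loopless := ⟨by
    rintro (u | u) h
    exacts [G.loopless.irrefl u h, h]⟩

variable {G}

lemma blowupBase_adj_inl_inr {u v : V} : (blowupBase G).Adj (.inl u) (.inr v) ↔ u = v :=
  Iff.rfl

lemma blowupBase_adj_inr_inl {u v : V} : (blowupBase G).Adj (.inr u) (.inl v) ↔ u = v :=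
  Iff.rfl

lemma blowupBase_adj_inl_inl {u v : V} : (blowupBase G).Adj (.inl u) (.inl v) ↔ G.Adj u v :=
  Iff.rfl

lemma not_blowupBase_adj_inr_inr {u v : V} : ¬(blowupBase G).Adj (.inr u) (.inr v) := id

variable (G)

lemma fromRel_eq_comap_blowupBase (Δ m : ℕ) :
    SimpleGraph.fromRel (fun a b : (V × Fin Δ) ⊕ (V × Fin m) =>
        (∃ u i v j, a = Sum.inl (u, i) ∧ b = Sum.inl (v, j) ∧ G.Adj u v) ∨
        (∃ u i j, a = Sum.inl (u, i) ∧ b = Sum.inr (u, j))) =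
      (blowupBase G).comap (Sum.map Prod.fst Prod.fst) := by
  ext (⟨u, i⟩ | ⟨u, i⟩) (⟨v, j⟩ | ⟨v, j⟩)
  all_goals simp only [SimpleGraph.fromRel_adj, SimpleGraph.comap_adj, Sum.map_inl, Sum.map_inr]
  all_goals simp [blowupBase]
  · exact ⟨fun ⟨_, h⟩ => h.elim id G.adj_symm,
      fun h => ⟨fun huv => absurd huv h.ne, Or.inl h⟩⟩
  · exact eq_comm

variable [Fintype V]

lemma fiberCard_sumMap_fst (Δ m : ℕ) :
    fiberCard (Sum.map Prod.fst Prod.fst : (V × Fin Δ) ⊕ (V × Fin m) → V ⊕ V) =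
      Sum.elim (fun _ => Δ) fun _ => m := by
  ext (u | u) <;>
    rw [fiberCard, card_filter, Fintype.sum_sum_type, Fintype.sum_prod_type,
      Fintype.sum_prod_type] <;>
    simp

lemma weightedCut_blowupBase (Δ m : ℕ) (T : Finset (V ⊕ V)) :
    weightedCut (blowupBase G) (Sum.elim (fun _ => Δ) fun _ => m) T =
      Δ ^ 2 * cutSize G T.toLeft +
        Δ * m * (#(T.toLeft \ T.toRight) + #(T.toRight \ T.toLeft)) := by
  have hcut : cutSize G T.toLeft =
      ∑ u, ∑ v, if G.Adj u v ∧ .inl u ∈ T ∧ .inl v ∉ T then 1 else 0 := by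
    rw [cutSize, card_filter, Fintype.sum_prod_type]
    simp only [mem_toLeft]
  have hsdiff (A B : Finset V) : #(A \ B) = ∑ u, if u ∈ A ∧ u ∉ B then 1 else 0 := by
    rw [← card_filter]
    congr 1
    ext u
    simp
  rw [weightedCut, sum_filter, Fintype.sum_prod_type, Fintype.sum_sum_type, hcut, hsdiff, hsdiff]
  simp only [Fintype.sum_sum_type, ite_and]
  simp only [blowupBase_adj_inl_inl, blowupBase_adj_inl_inr, blowupBase_adj_inr_inl,
    not_blowupBase_adj_inr_inr, Sum.elim_inl, Sum.elim_inr]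
  simp only [if_neg not_false, sum_const_zero, add_zero, sum_ite_eq, mem_univ, if_true,
    mem_toLeft, mem_toRight]
  simp only [mul_sum, mul_add, mul_ite, mul_one, mul_zero, sum_add_distrib]
  ring_nf

lemma maxWeightedCut_blowupBase (Δ m : ℕ) :
    maxWeightedCut (blowupBase G) (Sum.elim (fun _ => Δ) fun _ => m) =
      Δ ^ 2 * maxCut G + Δ * m * Fintype.card V := by
  apply le_antisymm
  · refine Finset.sup_le fun T _ => ?_
    rw [weightedCut_blowupBase]
    gcongr
    · exact le_sup (mem_univ _)
    · exact (card_union_of_disjoint disjoint_sdiff_sdiff).symm.trans_le (card_le_univ _)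
  · obtain ⟨S, -, hS⟩ := exists_mem_eq_sup univ univ_nonempty (cutSize G)
    calc Δ ^ 2 * maxCut G + Δ * m * Fintype.card V
        = weightedCut (blowupBase G) (Sum.elim (fun _ => Δ) fun _ => m) (S.disjSum Sᶜ) := by
          rw [weightedCut_blowupBase, toLeft_disjSum, toRight_disjSum, sdiff_compl, inf_idem,
            sdiff_eq_self_of_disjoint disjoint_compl_left, card_add_card_compl, maxCut, hS]
      _ ≤ _ := le_sup (mem_univ _)

end Blowup

theorem maxcut_blowup_general (n Δ : ℕ) (V : Type*) [Fintype V]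
    (G : SimpleGraph V) (hn : Fintype.card V = n) :
    maxCut (SimpleGraph.fromRel
      (fun a b : (V × Fin Δ) ⊕ (V × Fin (5 * Δ)) =>
        (∃ u i v j, a = Sum.inl (u, i) ∧ b = Sum.inl (v, j) ∧ G.Adj u v) ∨
        (∃ u i j, a = Sum.inl (u, i) ∧ b = Sum.inr (u, j)))) =
      Δ ^ 2 * maxCut G + 5 * Δ ^ 2 * n := by
  rw [fromRel_eq_comap_blowupBase, maxCut_comap, fiberCard_sumMap_fst, maxWeightedCut_blowupBase,
    hn]
  ring

/-- Blow-up construction for Max-Cut hardness: starting from a 5-regular graph G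
    on n vertices, replace each vertex u by Δ copies u_i plus 5Δ consistency
    vertices c^u_j; copies of adjacent vertices are completely joined, and all
    copies of u are joined to all consistency vertices of u. Then
    MaxCut(G') = Δ²·MaxCut(G) + 5Δ²·n. -/
theorem maxcut_blowup (n Δ : ℕ) (hΔ : 1 ≤ Δ) (V : Type*) [Fintype V]
    (G : SimpleGraph V) (hn : Fintype.card V = n)
    (hreg : ∀ v : V, (G.neighborFinset v).card = 5) :
    maxCut (SimpleGraph.fromRel
      (fun a b : (V × Fin Δ) ⊕ (V × Fin (5 * Δ)) =>
        (∃ u i v j, a = Sum.inl (u, i) ∧ b = Sum.inl (v, j) ∧ G.Adj u v) ∨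
        (∃ u i j, a = Sum.inl (u, i) ∧ b = Sum.inr (u, j)))) =
      Δ ^ 2 * maxCut G + 5 * Δ ^ 2 * n :=
  maxcut_blowup_general n Δ V G hn
end

section
/- Let φ be an instance of 2-SAT over variable set V with |V| = n and a family of M clauses, each a disjunction of two literals over V, and let k ≥ 3 be an integer. Construct a k-SAT instance ψ over variable set V ∪ {x_{(t,j)} : 1 ≤ t ≤ k−2, 1 ≤ j ≤ n} as follows: for each clause (l1 ∨ l2) of φ, each tuple (i_1,…,i_{k−2}) ∈ {1,…,n}^{k−2}, and each subset S ⊆ {1,…,k−2}, include the clause (l1 ∨ l2 ∨ λ_1 ∨ ⋯ ∨ λ_{k−2}), where λ_t = ¬x_{(t,i_t)} if t ∈ S and λ_t = x_{(t,i_t)} otherwise. Then for every truth assignment σ to all the variables of ψ, the number of clauses of ψ satisfied by σ equals n^{k−2}·((2^{k−2}−1)·M + S(σ)), where S(σ) is the number of clauses of φ satisfied by the restriction of σ to V. -/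
/-!
Fix a clause of φ and a tuple `i`. The padded clauses over the `2^(k-2)` negation patterns all
contain that clause of φ, and all but one of them also contain a literal `x_{(t, i t)}` made true
by σ: the exception is the pattern that negates exactly the padding variables σ sets to true.
So the clause of φ contributes `2^(k-2)` satisfied clauses per tuple if σ satisfies it and
`2^(k-2) - 1` otherwise.
-/

open Finset

theorem exists_eq_not_iff_ne {ι : Type*} (τ b : ι → Bool) : (∃ t, τ t = !b t) ↔ b ≠ τ := by
  simp only [Function.ne_iff, Bool.eq_not_iff, ne_comm]

theorem card_filter_or_exists_eq_not {ι : Type*} [Fintype ι] [DecidableEq ι] (P : Prop)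
    [Decidable P] (τ : ι → Bool) :
    #{b : ι → Bool | P ∨ ∃ t, τ t = !b t} = 2 ^ Fintype.card ι - 1 + if P then 1 else 0 := by
  by_cases hP : P
  · simp only [hP, true_or, filter_true, card_univ, Fintype.card_fun, Fintype.card_bool, if_true]
    exact (Nat.sub_add_cancel Nat.one_le_two_pow).symm
  · simp only [hP, false_or, exists_eq_not_iff_ne, filter_ne', card_erase_of_mem (mem_univ _),
      card_univ, Fintype.card_fun, Fintype.card_bool, if_false, add_zero]

open Classical in
theorem twosat_to_ksat_clause_count_general (n M k : ℕ)
    (φ : Fin M → ((Fin n × Bool) × (Fin n × Bool)))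
    (σ : (Fin n ⊕ (Fin (k - 2) × Fin n)) → Bool) :
    ((Finset.univ.filter fun ct : Fin M × (Fin (k - 2) → Fin n) × (Fin (k - 2) → Bool) =>
        (σ (Sum.inl (φ ct.1).1.1) = (φ ct.1).1.2) ∨
        (σ (Sum.inl (φ ct.1).2.1) = (φ ct.1).2.2) ∨
        (∃ t : Fin (k - 2), σ (Sum.inr (t, ct.2.1 t)) = !(ct.2.2 t))).card) =
      n ^ (k - 2) * ((2 ^ (k - 2) - 1) * M +
        (Finset.univ.filter fun cl : Fin M =>
          (σ (Sum.inl (φ cl).1.1) = (φ cl).1.2) ∨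
          (σ (Sum.inl (φ cl).2.1) = (φ cl).2.2)).card) := by
  set sat : Fin M → Prop := fun c =>
    σ (Sum.inl (φ c).1.1) = (φ c).1.2 ∨ σ (Sum.inl (φ c).2.1) = (φ c).2.2
  calc _ = ∑ c, ∑ i : Fin (k - 2) → Fin n,
          #{b : Fin (k - 2) → Bool | sat c ∨ ∃ t, σ (Sum.inr (t, i t)) = !b t} := by
        simp only [card_filter, Fintype.sum_prod_type, sat, or_assoc]
    _ = ∑ c, ∑ _i : Fin (k - 2) → Fin n, (2 ^ (k - 2) - 1 + if sat c then 1 else 0) := by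
        refine sum_congr rfl fun c _ => sum_congr rfl fun i _ => ?_
        -- `convert` reconciles the classical decidability instance of the filter
        convert card_filter_or_exists_eq_not (sat c) fun t => σ (Sum.inr (t, i t))
        rw [Fintype.card_fin]
    _ = _ := by
        simp only [sum_const, card_univ, Fintype.card_fun, Fintype.card_fin, smul_eq_mul,
          sum_add_distrib, card_filter, sat, ← mul_sum]
        ring

open Classical in
/-- 2-SAT to k-SAT padding reduction: variables of ψ are V ⊕ (groups × V);
    literals are (variable, polarity) pairs, and a literal (v, b) is satisfied
    by σ iff σ v = b. For every assignment σ to all variables of ψ, the number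
    of satisfied clauses of ψ (indexed by a clause of φ, a tuple
    (i_1,…,i_{k−2}) ∈ {1,…,n}^{k−2} and a negation pattern S) equals
    n^{k−2}·((2^{k−2}−1)·M + S(σ)). -/
theorem twosat_to_ksat_clause_count (n M k : ℕ) (hk : 3 ≤ k)
    (φ : Fin M → ((Fin n × Bool) × (Fin n × Bool)))
    (σ : (Fin n ⊕ (Fin (k - 2) × Fin n)) → Bool) :
    ((Finset.univ.filter fun ct : Fin M × (Fin (k - 2) → Fin n) × (Fin (k - 2) → Bool) =>
        (σ (Sum.inl (φ ct.1).1.1) = (φ ct.1).1.2) ∨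
        (σ (Sum.inl (φ ct.1).2.1) = (φ ct.1).2.2) ∨
        (∃ t : Fin (k - 2), σ (Sum.inr (t, ct.2.1 t)) = !(ct.2.2 t))).card) =
      n ^ (k - 2) * ((2 ^ (k - 2) - 1) * M +
        (Finset.univ.filter fun cl : Fin M =>
          (σ (Sum.inl (φ cl).1.1) = (φ cl).1.2) ∨
          (σ (Sum.inl (φ cl).2.1) = (φ cl).2.2)).card) :=
  twosat_to_ksat_clause_count_general n M k φ σ
end
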